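/- arXiv:2308.08358 — 5 statements merged into one kernel-verified Lean document; each statement's English description precedes it below -/
import Mathlib

section
/- Suppose ‖b‖₂ ≤ 1. Then for every x ∈ ℝ^d, the symmetric m×m matrix B(x) satisfies −20·I_m ≼ B(x) ≼ 20·I_m in the Loewner (positive-semidefinite) order; that is, |vᵀ B(x) v| ≤ 20 ‖v‖₂² for all v ∈ ℝ^m. -/
open Matrix BigOperators

noncomputable section

/-- entrywise ReLU on a Euclidean vector -/
def relu {k : ℕ} (x : EuclideanSpace ℝ (Fin k)) : EuclideanSpace ℝ (Fin k) :=
  WithLp.toLp 2 (fun i => max 0 (x i))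

/-- entrywise exponential on a Euclidean vector -/
def vexp {k : ℕ} (x : EuclideanSpace ℝ (Fin k)) : EuclideanSpace ℝ (Fin k) :=
  WithLp.toLp 2 (fun i => Real.exp (x i))

/-- matrix-vector product as a map between Euclidean spaces -/
def mulE {k l : ℕ} (A : Matrix (Fin k) (Fin l) ℝ) (x : EuclideanSpace ℝ (Fin l)) :
    EuclideanSpace ℝ (Fin k) :=
  WithLp.toLp 2 (fun i => ∑ j, A i j * x j)

/-- ℓ²-operator norm of a matrix -/
def opNorm {k l : ℕ} (A : Matrix (Fin k) (Fin l) ℝ) : ℝ :=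
  ‖LinearMap.toContinuousLinearMap (Matrix.toEuclideanLin A)‖

/-- indicator of positivity, entrywise: the vector 1[y > 0] -/
def ind {k : ℕ} (y : EuclideanSpace ℝ (Fin k)) : Fin k → ℝ :=
  fun i => if 0 < y i then 1 else 0

variable {n m d : ℕ}

/-- h(x) = φ(A₁ x) -/
def hfun (A₁ : Matrix (Fin n) (Fin d) ℝ) (x : EuclideanSpace ℝ (Fin d)) :
    EuclideanSpace ℝ (Fin n) := relu (mulE A₁ x)

/-- u(x) = exp(A₂ φ(A₁ x)) -/
def ufun (A₁ : Matrix (Fin n) (Fin d) ℝ) (A₂ : Matrix (Fin m) (Fin n) ℝ)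
    (x : EuclideanSpace ℝ (Fin d)) : EuclideanSpace ℝ (Fin m) :=
  vexp (mulE A₂ (hfun A₁ x))

/-- α(x) = ⟨u(x), 1_m⟩ -/
def afun (A₁ : Matrix (Fin n) (Fin d) ℝ) (A₂ : Matrix (Fin m) (Fin n) ℝ)
    (x : EuclideanSpace ℝ (Fin d)) : ℝ :=
  ∑ i, ufun A₁ A₂ x i

/-- f(x) = α(x)⁻¹ • u(x) -/
def ffun (A₁ : Matrix (Fin n) (Fin d) ℝ) (A₂ : Matrix (Fin m) (Fin n) ℝ)
    (x : EuclideanSpace ℝ (Fin d)) : EuclideanSpace ℝ (Fin m) :=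
  (afun A₁ A₂ x)⁻¹ • ufun A₁ A₂ x

/-- c(x) = f(x) - b -/
def cfun (A₁ : Matrix (Fin n) (Fin d) ℝ) (A₂ : Matrix (Fin m) (Fin n) ℝ)
    (b : EuclideanSpace ℝ (Fin m)) (x : EuclideanSpace ℝ (Fin d)) :
    EuclideanSpace ℝ (Fin m) :=
  ffun A₁ A₂ x - b

/-- the matrix B(x) appearing in the decomposition of the Hessian -/
def Bmat (A₁ : Matrix (Fin n) (Fin d) ℝ) (A₂ : Matrix (Fin m) (Fin n) ℝ)
    (b : EuclideanSpace ℝ (Fin m)) (x : EuclideanSpace ℝ (Fin d)) :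
    Matrix (Fin m) (Fin m) ℝ :=
  Matrix.diagonal (fun i => ffun A₁ A₂ x i * (ffun A₁ A₂ x i + cfun A₁ A₂ b x i))
  - Matrix.diagonal (fun i => ffun A₁ A₂ x i)
      * Matrix.vecMulVec (fun i => cfun A₁ A₂ b x i + ffun A₁ A₂ x i) (fun i => ffun A₁ A₂ x i)
  - Matrix.vecMulVec (fun i => ffun A₁ A₂ x i) (fun i => cfun A₁ A₂ b x i + ffun A₁ A₂ x i)
      * Matrix.diagonal (fun i => ffun A₁ A₂ x i)
  + (∑ i, (2 * cfun A₁ A₂ b x i + ffun A₁ A₂ x i) * ffun A₁ A₂ x i)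
      • Matrix.vecMulVec (fun i => ffun A₁ A₂ x i) (fun i => ffun A₁ A₂ x i)
  - (∑ i, cfun A₁ A₂ b x i * ffun A₁ A₂ x i)
      • Matrix.diagonal (fun i => ffun A₁ A₂ x i)

lemma coord_le_norm {k : ℕ} (w : EuclideanSpace ℝ (Fin k)) (i : Fin k) : |w i| ≤ ‖w‖ := by
  rw [EuclideanSpace.norm_eq]
  have h : |w i| = Real.sqrt (‖w i‖^2) := by rw [Real.sqrt_sq_eq_abs]; simp
  rw [h]
  exact Real.sqrt_le_sqrt (Finset.single_le_sum (f := fun j => ‖w j‖^2)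
    (fun j _ => sq_nonneg _) (Finset.mem_univ i))

lemma norm_sq_eq' {k : ℕ} (w : EuclideanSpace ℝ (Fin k)) : ‖w‖^2 = ∑ i, w i ^ 2 := by
  rw [EuclideanSpace.norm_eq, Real.sq_sqrt (Finset.sum_nonneg fun i _ => sq_nonneg _)]
  simp [sq_abs]

lemma Bmat_apply (A₁ : Matrix (Fin n) (Fin d) ℝ) (A₂ : Matrix (Fin m) (Fin n) ℝ)
    (b : EuclideanSpace ℝ (Fin m)) (x : EuclideanSpace ℝ (Fin d)) (i j : Fin m) :
    Bmat A₁ A₂ b x i j =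
      (if i = j then ffun A₁ A₂ x i * (ffun A₁ A₂ x i + cfun A₁ A₂ b x i) else 0)
      - ffun A₁ A₂ x i * ((cfun A₁ A₂ b x i + ffun A₁ A₂ x i) * ffun A₁ A₂ x j)
      - ffun A₁ A₂ x i * ((cfun A₁ A₂ b x j + ffun A₁ A₂ x j) * ffun A₁ A₂ x j)
      + (∑ k, (2 * cfun A₁ A₂ b x k + ffun A₁ A₂ x k) * ffun A₁ A₂ x k)
          * (ffun A₁ A₂ x i * ffun A₁ A₂ x j)
      - (if i = j then (∑ k, cfun A₁ A₂ b x k * ffun A₁ A₂ x k) * ffun A₁ A₂ x i else 0) := by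
  simp [Bmat, Matrix.sub_apply, Matrix.add_apply, Matrix.smul_apply, Matrix.diagonal_mul,
    Matrix.mul_diagonal, Matrix.vecMulVec_apply, Matrix.diagonal_apply, smul_eq_mul,
    mul_ite, mul_zero]
  ring_nf

/-- if ‖b‖₂ ≤ 1 then for every x the symmetric matrix B(x) satisfies
−20 I ≼ B(x) ≼ 20 I, i.e. |vᵀ B(x) v| ≤ 20 ‖v‖₂² for all v. -/
theorem statement12 (n m d : ℕ) (hn : 0 < n) (hm : 0 < m) (hd : 0 < d)
    (A₁ : Matrix (Fin n) (Fin d) ℝ) (A₂ : Matrix (Fin m) (Fin n) ℝ)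
    (b : EuclideanSpace ℝ (Fin m)) (hb : ‖b‖ ≤ 1) :
    ∀ x : EuclideanSpace ℝ (Fin d), ∀ v : EuclideanSpace ℝ (Fin m),
      |∑ i, v i * ∑ j, Bmat A₁ A₂ b x i j * v j| ≤ 20 * ‖v‖ ^ 2 := by
  intro x v
  set F : Fin m → ℝ := fun i => ffun A₁ A₂ x i with hFdef
  set C : Fin m → ℝ := fun i => cfun A₁ A₂ b x i with hCdef
  -- basic facts about f
  have hupos : ∀ i, 0 < ufun A₁ A₂ x i := fun i => by unfold ufun vexp; exact Real.exp_pos _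
  have hapos : 0 < afun A₁ A₂ x :=
    Finset.sum_pos (fun i _ => hupos i)
      (Finset.univ_nonempty_iff.mpr (Fin.pos_iff_nonempty.mp hm))
  have hFval : ∀ i, F i = (afun A₁ A₂ x)⁻¹ * ufun A₁ A₂ x i := by
    intro i; simp [hFdef, ffun]
  have hFnn : ∀ i, 0 ≤ F i := by
    intro i; rw [hFval]
    exact mul_nonneg (inv_nonneg.mpr hapos.le) (hupos i).le
  have hFsum : ∑ i, F i = 1 := by
    simp only [hFval]
    rw [← Finset.mul_sum]
    exact inv_mul_cancel₀ hapos.ne'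
  have hF1 : ∀ i, F i ≤ 1 := by
    intro i
    calc F i ≤ ∑ j, F j := Finset.single_le_sum (fun j _ => hFnn j) (Finset.mem_univ i)
    _ = 1 := hFsum
  have hFabs : ∀ i, |F i| ≤ 1 := fun i => abs_le.mpr ⟨by linarith [hFnn i], hF1 i⟩
  have hCabs : ∀ i, |C i| ≤ 2 := by
    intro i
    have hbi : |b i| ≤ 1 := le_trans (coord_le_norm b i) hb
    have : C i = F i - b i := by simp [hCdef, cfun, hFdef]
    rw [this]
    calc |F i - b i| ≤ |F i| + |b i| := abs_sub _ _
    _ ≤ 1 + 1 := add_le_add (hFabs i) hbi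
    _ = 2 := by norm_num
  have hvabs : ∀ i, |v i| ≤ ‖v‖ := fun i => coord_le_norm v i
  have hnv : 0 ≤ ‖v‖ := norm_nonneg v
  -- abbreviations
  set P : ℝ := ∑ i, F i * v i with hPdef
  set R : ℝ := ∑ i, (C i + F i) * F i * v i with hRdef
  set S1 : ℝ := ∑ i, (2 * C i + F i) * F i with hS1def
  set S2 : ℝ := ∑ i, C i * F i with hS2def
  set D1 : ℝ := ∑ i, F i * (F i + C i) * v i ^ 2 with hD1def
  set D2 : ℝ := ∑ i, F i * v i ^ 2 with hD2def
  -- the quadratic form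
  have hinner : ∀ i, (∑ j, Bmat A₁ A₂ b x i j * v j) =
      F i * (F i + C i) * v i - F i * (C i + F i) * P - F i * R + S1 * (F i * P)
        - S2 * (F i * v i) := by
    intro i
    have key : ∀ j, Bmat A₁ A₂ b x i j * v j =
        ((if i = j then F i * (F i + C i) * v j else 0)
        - F i * (C i + F i) * (F j * v j)
        - F i * ((C j + F j) * F j * v j)
        + (S1 * (F i)) * (F j * v j)
        - (if i = j then S2 * (F i * v j) else 0)) := by
      intro j
      rw [Bmat_apply]
      simp only [hCdef, hFdef, hS1def, hS2def]
      split <;> ring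
    rw [Finset.sum_congr rfl (fun j _ => key j)]
    rw [Finset.sum_sub_distrib, Finset.sum_add_distrib, Finset.sum_sub_distrib,
      Finset.sum_sub_distrib]
    simp only [Finset.sum_ite_eq, Finset.mem_univ, if_true]
    have e1 : (∑ j, F i * (C i + F i) * (F j * v j)) = F i * (C i + F i) * P := by
      rw [hPdef, Finset.mul_sum]
    have e2 : (∑ j, F i * ((C j + F j) * F j * v j)) = F i * R := by
      rw [hRdef, Finset.mul_sum]
    have e3 : (∑ j, (S1 * F i) * (F j * v j)) = (S1 * F i) * P := by
      rw [hPdef, Finset.mul_sum]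
    rw [e1, e2, e3]
    ring
  have hQ : (∑ i, v i * ∑ j, Bmat A₁ A₂ b x i j * v j) =
      D1 - R * P - P * R + S1 * (P * P) - S2 * D2 := by
    rw [Finset.sum_congr rfl (fun i _ => by rw [hinner i])]
    have expand : ∀ i, v i * (F i * (F i + C i) * v i - F i * (C i + F i) * P - F i * R
        + S1 * (F i * P) - S2 * (F i * v i)) =
        F i * (F i + C i) * v i ^ 2 - ((C i + F i) * F i * v i) * P - (F i * v i) * R
        + (S1 * P) * (F i * v i) - S2 * (F i * v i ^ 2) := by
      intro i; ring
    rw [Finset.sum_congr rfl (fun i _ => expand i)]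
    rw [Finset.sum_sub_distrib, Finset.sum_add_distrib, Finset.sum_sub_distrib,
      Finset.sum_sub_distrib, ← Finset.sum_mul, ← Finset.sum_mul, ← Finset.mul_sum,
      ← Finset.mul_sum]
    rw [← hD1def, ← hRdef, ← hPdef, ← hD2def]
    ring
  -- bounds
  have hPb : |P| ≤ ‖v‖ := by
    calc |P| ≤ ∑ i, |F i * v i| := Finset.abs_sum_le_sum_abs _ _
    _ ≤ ∑ i, F i * ‖v‖ := by
        apply Finset.sum_le_sum; intro i _
        rw [abs_mul, abs_of_nonneg (hFnn i)]
        exact mul_le_mul_of_nonneg_left (hvabs i) (hFnn i)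
    _ = ‖v‖ := by rw [← Finset.sum_mul, hFsum, one_mul]
  have hRb : |R| ≤ 3 * ‖v‖ := by
    calc |R| ≤ ∑ i, |(C i + F i) * F i * v i| := Finset.abs_sum_le_sum_abs _ _
    _ ≤ ∑ i, 3 * (F i * ‖v‖) := by
        apply Finset.sum_le_sum; intro i _
        rw [abs_mul, abs_mul, abs_of_nonneg (hFnn i)]
        have h1 : |C i + F i| ≤ 3 := by
          calc |C i + F i| ≤ |C i| + |F i| := abs_add_le _ _
          _ ≤ 2 + 1 := add_le_add (hCabs i) (hFabs i)
          _ = 3 := by norm_num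
        calc |C i + F i| * F i * |v i| ≤ 3 * F i * ‖v‖ := by
              apply mul_le_mul (mul_le_mul_of_nonneg_right h1 (hFnn i)) (hvabs i)
                (abs_nonneg _) (by linarith [hFnn i])
        _ = 3 * (F i * ‖v‖) := by ring
    _ = 3 * ‖v‖ := by rw [← Finset.mul_sum, ← Finset.sum_mul, hFsum, one_mul]
  have hS1b : |S1| ≤ 5 := by
    calc |S1| ≤ ∑ i, |(2 * C i + F i) * F i| := Finset.abs_sum_le_sum_abs _ _
    _ ≤ ∑ i, 5 * F i := by
        apply Finset.sum_le_sum; intro i _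
        rw [abs_mul, abs_of_nonneg (hFnn i)]
        apply mul_le_mul_of_nonneg_right _ (hFnn i)
        calc |2 * C i + F i| ≤ |2 * C i| + |F i| := abs_add_le _ _
        _ ≤ 2 * 2 + 1 := by
            rw [abs_mul]
            exact add_le_add (by simpa using mul_le_mul_of_nonneg_left (hCabs i) (by norm_num : (0:ℝ) ≤ |(2:ℝ)|) ) (hFabs i)
        _ = 5 := by norm_num
    _ = 5 := by rw [← Finset.mul_sum, hFsum, mul_one]
  have hS2b : |S2| ≤ 2 := by
    calc |S2| ≤ ∑ i, |C i * F i| := Finset.abs_sum_le_sum_abs _ _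
    _ ≤ ∑ i, 2 * F i := by
        apply Finset.sum_le_sum; intro i _
        rw [abs_mul, abs_of_nonneg (hFnn i)]
        exact mul_le_mul_of_nonneg_right (hCabs i) (hFnn i)
    _ = 2 := by rw [← Finset.mul_sum, hFsum, mul_one]
  have hD1b : |D1| ≤ 3 * ‖v‖ ^ 2 := by
    calc |D1| ≤ ∑ i, |F i * (F i + C i) * v i ^ 2| := Finset.abs_sum_le_sum_abs _ _
    _ ≤ ∑ i, 3 * v i ^ 2 := by
        apply Finset.sum_le_sum; intro i _
        rw [abs_mul, abs_mul, abs_of_nonneg (sq_nonneg (v i))]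
        apply mul_le_mul_of_nonneg_right _ (sq_nonneg _)
        calc |F i| * |F i + C i| ≤ 1 * 3 := by
              apply mul_le_mul (hFabs i) _ (abs_nonneg _) (by norm_num)
              calc |F i + C i| ≤ |F i| + |C i| := abs_add_le _ _
              _ ≤ 1 + 2 := add_le_add (hFabs i) (hCabs i)
              _ = 3 := by norm_num
        _ = 3 := by norm_num
    _ = 3 * ‖v‖ ^ 2 := by rw [← Finset.mul_sum, norm_sq_eq']
  have hD2nn : 0 ≤ D2 := Finset.sum_nonneg fun i _ => mul_nonneg (hFnn i) (sq_nonneg _)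
  have hD2b : D2 ≤ ‖v‖ ^ 2 := by
    rw [norm_sq_eq', hD2def]
    apply Finset.sum_le_sum
    intro i _
    have := mul_le_mul_of_nonneg_right (hF1 i) (sq_nonneg (v i))
    simpa using this
  -- finish
  rw [hQ]
  have h1 : |D1 - R * P - P * R + S1 * (P * P) - S2 * D2| ≤
      |D1| + |R * P| + |P * R| + |S1 * (P * P)| + |S2 * D2| := by
    calc |D1 - R * P - P * R + S1 * (P * P) - S2 * D2|
        ≤ |D1 - R * P - P * R + S1 * (P * P)| + |S2 * D2| := abs_sub _ _
    _ ≤ |D1 - R * P - P * R| + |S1 * (P * P)| + |S2 * D2| := by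
        gcongr ?_ + _; exact abs_add_le _ _
    _ ≤ |D1 - R * P| + |P * R| + |S1 * (P * P)| + |S2 * D2| := by
        gcongr ?_ + _ + _; exact abs_sub _ _
    _ ≤ |D1| + |R * P| + |P * R| + |S1 * (P * P)| + |S2 * D2| := by
        gcongr ?_ + _ + _ + _; exact abs_sub _ _
  refine le_trans h1 ?_
  have h2 : |R * P| ≤ 3 * ‖v‖ * ‖v‖ := by
    rw [abs_mul]
    exact mul_le_mul hRb hPb (abs_nonneg _) (by positivity)
  have h3 : |P * R| ≤ ‖v‖ * (3 * ‖v‖) := by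
    rw [abs_mul]
    exact mul_le_mul hPb hRb (abs_nonneg _) hnv
  have h4 : |S1 * (P * P)| ≤ 5 * (‖v‖ * ‖v‖) := by
    rw [abs_mul, abs_mul]
    exact mul_le_mul hS1b (mul_le_mul hPb hPb (abs_nonneg _) hnv) (by positivity) (by norm_num)
  have h5 : |S2 * D2| ≤ 2 * ‖v‖ ^ 2 := by
    rw [abs_mul, abs_of_nonneg hD2nn]
    exact mul_le_mul hS2b hD2b hD2nn (by norm_num)
  nlinarith [sq_nonneg ‖v‖, hnv]
end
end

section
/- Let x ∈ ℝ^d and set C := A₂ · diag(1[A₁x]) · A₁ ∈ ℝ^{m×d}. Suppose ‖b‖₂ ≤ 1, C has full column rank with smallest singular value σ_min(C) > 0, l > 0 is a scalar, and w ∈ ℝ^m satisfies w_i² ≥ 20 + l / σ_min(C)² for every i ∈ [m]. Let W = diag(w). Then the regularized Hessian satisfies Cᵀ (B(x) + W²) C ≽ l · I_d; that is, vᵀ Cᵀ (B(x) + W²) C v ≥ l ‖v‖₂² for all v ∈ ℝ^d. -/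
set_option maxHeartbeats 2000000


open Matrix BigOperators

noncomputable section
variable {n m d : ℕ}

lemma quad_diag {m : ℕ} (g y : Fin m → ℝ) :
    y ⬝ᵥ ((Matrix.diagonal g) *ᵥ y) = ∑ i, g i * y i ^ 2 := by
  simp [Matrix.mulVec_diagonal, dotProduct]
  exact Finset.sum_congr rfl fun i _ => by ring

lemma vmv_mulVec {m : ℕ} (a g y : Fin m → ℝ) :
    (Matrix.vecMulVec a g) *ᵥ y = fun i => a i * (∑ j, g j * y j) := by
  funext i
  simp [Matrix.mulVec, dotProduct, Matrix.vecMulVec_apply, Finset.mul_sum, mul_assoc]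

lemma quad_vmv {m : ℕ} (a g y : Fin m → ℝ) :
    y ⬝ᵥ ((Matrix.vecMulVec a g) *ᵥ y) = (∑ i, y i * a i) * (∑ i, g i * y i) := by
  rw [vmv_mulVec]
  simp [dotProduct, Finset.sum_mul, mul_assoc]

lemma quad_dvmv {m : ℕ} (f a g y : Fin m → ℝ) :
    y ⬝ᵥ ((Matrix.diagonal f * Matrix.vecMulVec a g) *ᵥ y)
      = (∑ i, y i * (f i * a i)) * (∑ i, g i * y i) := by
  rw [← Matrix.mulVec_mulVec, vmv_mulVec]
  simp [dotProduct, Matrix.mulVec_diagonal, Finset.sum_mul]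
  exact Finset.sum_congr rfl fun i _ => by ring

lemma quad_vmvd {m : ℕ} (f a g y : Fin m → ℝ) :
    y ⬝ᵥ ((Matrix.vecMulVec a g * Matrix.diagonal f) *ᵥ y)
      = (∑ i, y i * a i) * (∑ i, g i * f i * y i) := by
  rw [← Matrix.mulVec_mulVec]
  have h1 : Matrix.diagonal f *ᵥ y = fun i => f i * y i :=
    funext fun i => Matrix.mulVec_diagonal _ _ _
  have h2 : (∑ i, g i * f i * y i) = ∑ i, g i * (f i * y i) :=
    Finset.sum_congr rfl fun _ _ => by ring
  rw [h1, vmv_mulVec, h2]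
  simp only [dotProduct, Finset.sum_mul]
  exact Finset.sum_congr rfl fun i _ => by ring

/-- abstract form of `Bmat` -/
def BmatAbs {m : ℕ} (f c : Fin m → ℝ) : Matrix (Fin m) (Fin m) ℝ :=
  Matrix.diagonal (fun i => f i * (f i + c i))
  - Matrix.diagonal f * Matrix.vecMulVec (fun i => c i + f i) f
  - Matrix.vecMulVec f (fun i => c i + f i) * Matrix.diagonal f
  + (∑ i, (2 * c i + f i) * f i) • Matrix.vecMulVec f f
  - (∑ i, c i * f i) • Matrix.diagonal f

lemma quadB {m : ℕ} (f c y : Fin m → ℝ) :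
    y ⬝ᵥ (BmatAbs f c *ᵥ y)
      = (∑ i, f i * (f i + c i) * y i ^ 2)
        - (∑ i, f i * (c i + f i) * y i) * (∑ i, f i * y i)
        - (∑ i, f i * y i) * (∑ i, f i * (c i + f i) * y i)
        + (∑ i, (2 * c i + f i) * f i) * (∑ i, f i * y i) ^ 2
        - (∑ i, c i * f i) * (∑ i, f i * y i ^ 2) := by
  unfold BmatAbs
  rw [Matrix.sub_mulVec, Matrix.add_mulVec, Matrix.sub_mulVec, Matrix.sub_mulVec,
    Matrix.smul_mulVec, Matrix.smul_mulVec,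
    dotProduct_sub, dotProduct_add, dotProduct_sub, dotProduct_sub,
    dotProduct_smul, dotProduct_smul,
    quad_diag, quad_dvmv, quad_vmvd, quad_vmv, quad_diag]
  have e1 : (∑ i, y i * (f i * (c i + f i))) = ∑ i, f i * (c i + f i) * y i :=
    Finset.sum_congr rfl fun i _ => by ring
  have e2 : (∑ i, y i * f i) = ∑ i, f i * y i := Finset.sum_congr rfl fun i _ => by ring
  have e3 : (∑ i, (c i + f i) * f i * y i) = ∑ i, f i * (c i + f i) * y i :=
    Finset.sum_congr rfl fun i _ => by ring
  rw [e1, e2, e3]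
  simp only [smul_eq_mul]
  ring

/-- with C = A₂ diag(1[A₁x]) A₁ of full column rank with smallest
singular value σmin > 0 (so that ‖Cv‖₂ ≥ σmin ‖v‖₂ for all v), ‖b‖₂ ≤ 1, l > 0 and
w_i² ≥ 20 + l/σmin² for all i, the regularized Hessian satisfies
Cᵀ(B(x) + W²)C ≽ l·I_d, i.e. vᵀ Cᵀ(B(x)+W²)C v ≥ l‖v‖₂² for all v. -/
theorem statement13 (n m d : ℕ) (hn : 0 < n) (hm : 0 < m) (hd : 0 < d)
    (A₁ : Matrix (Fin n) (Fin d) ℝ) (A₂ : Matrix (Fin m) (Fin n) ℝ)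
    (b w : EuclideanSpace ℝ (Fin m)) (x : EuclideanSpace ℝ (Fin d))
    (C : Matrix (Fin m) (Fin d) ℝ)
    (hC : C = A₂ * Matrix.diagonal (ind (mulE A₁ x)) * A₁)
    (hb : ‖b‖ ≤ 1) (σmin : ℝ) (hσpos : 0 < σmin)
    (hσ : ∀ v : EuclideanSpace ℝ (Fin d), σmin * ‖v‖ ≤ ‖mulE C v‖)
    (l : ℝ) (hl : 0 < l)
    (hw : ∀ i, 20 + l / σmin ^ 2 ≤ w i ^ 2) :
    ∀ v : EuclideanSpace ℝ (Fin d),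
      l * ‖v‖ ^ 2 ≤
        ∑ i, v i *
          ((Cᵀ * (Bmat A₁ A₂ b x + Matrix.diagonal (fun i => w i ^ 2)) * C).mulVec
            v) i := by
  intro v
  haveI : Nonempty (Fin m) := Fin.pos_iff_nonempty.mp hm
  set M : Matrix (Fin m) (Fin m) ℝ :=
    Bmat A₁ A₂ b x + Matrix.diagonal (fun i => w i ^ 2) with hM
  set y : Fin m → ℝ := C *ᵥ (v : Fin d → ℝ) with hy
  set f : Fin m → ℝ := fun i => ffun A₁ A₂ x i with hf
  set c : Fin m → ℝ := fun i => cfun A₁ A₂ b x i with hc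
  -- Step A: reduce to quadratic form in y
  have hstep : ∑ i, v i * ((Cᵀ * M * C) *ᵥ (v : Fin d → ℝ)) i = y ⬝ᵥ (M *ᵥ y) := by
    show (v : Fin d → ℝ) ⬝ᵥ ((Cᵀ * M * C) *ᵥ (v : Fin d → ℝ)) = _
    rw [← Matrix.mulVec_mulVec, ← Matrix.mulVec_mulVec, Matrix.dotProduct_mulVec,
      Matrix.vecMul_transpose, hy]
  rw [hstep]
  -- basic facts about f
  have hα : 0 < afun A₁ A₂ x := by
    apply Finset.sum_pos
    · intro i _
      exact Real.exp_pos _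
    · exact Finset.univ_nonempty
  have hfi : ∀ i, f i = (afun A₁ A₂ x)⁻¹ * ufun A₁ A₂ x i := fun i => rfl
  have hupos : ∀ i, 0 < ufun A₁ A₂ x i := fun i => Real.exp_pos _
  have hf0 : ∀ i, 0 ≤ f i := fun i =>
    le_of_lt (mul_pos (inv_pos.mpr hα) (hupos i))
  have hfs : ∑ i, f i = 1 := by
    simp only [hfi]
    rw [← Finset.mul_sum]
    exact inv_mul_cancel₀ (ne_of_gt hα)
  have hf1 : ∀ i, f i ≤ 1 := by
    intro i
    calc f i ≤ ∑ j, f j := Finset.single_le_sum (fun j _ => hf0 j) (Finset.mem_univ i)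
    _ = 1 := hfs
  -- bound on b and c
  have hbnorm : ∑ i, (b i) ^ 2 ≤ 1 := by
    have h1 : ‖b‖ ^ 2 ≤ 1 := by nlinarith [norm_nonneg b]
    have h2 : ‖b‖ ^ 2 = ∑ i, (b i) ^ 2 := by
      rw [EuclideanSpace.norm_eq]
      rw [Real.sq_sqrt (by positivity)]
      exact Finset.sum_congr rfl fun i _ => by rw [Real.norm_eq_abs, sq_abs]
    linarith [h1, h2]
  have hbi : ∀ i, |b i| ≤ 1 := by
    intro i
    have : (b i) ^ 2 ≤ 1 :=
      le_trans (Finset.single_le_sum (fun j _ => sq_nonneg (b j)) (Finset.mem_univ i)) hbnorm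
    nlinarith [abs_nonneg (b i), sq_abs (b i)]
  have hcif : ∀ i, c i = f i - b i := fun i => rfl
  have hci : ∀ i, |c i| ≤ 2 := by
    intro i
    rw [hcif, abs_le]
    obtain ⟨hb1, hb2⟩ := abs_le.mp (hbi i)
    exact ⟨by linarith [hf0 i], by linarith [hf1 i]⟩
  -- key quantities
  set Q : ℝ := ∑ i, f i * y i ^ 2 with hQdef
  set N2 : ℝ := ∑ i, y i ^ 2 with hN2def
  set s : ℝ := ∑ i, f i * y i with hsdef
  set σs : ℝ := ∑ i, f i * |y i| with hσsdef
  set t : ℝ := ∑ i, f i * (c i + f i) * y i with htdef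
  have hQ0 : 0 ≤ Q := Finset.sum_nonneg fun i _ => mul_nonneg (hf0 i) (sq_nonneg _)
  have hN20 : 0 ≤ N2 := Finset.sum_nonneg fun i _ => sq_nonneg _
  have hQN : Q ≤ N2 := Finset.sum_le_sum fun i _ => by
    nlinarith [hf1 i, sq_nonneg (y i)]
  -- Cauchy-Schwarz: σs^2 ≤ Q, and |s| ≤ σs
  have hσsQ : σs ^ 2 ≤ Q := by
    have hcs := Finset.sum_mul_sq_le_sq_mul_sq Finset.univ
      (fun i => Real.sqrt (f i)) (fun i => Real.sqrt (f i) * |y i|)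
    have e1 : ∀ i, Real.sqrt (f i) * (Real.sqrt (f i) * |y i|) = f i * |y i| := by
      intro i
      rw [← mul_assoc, Real.mul_self_sqrt (hf0 i)]
    have e2 : ∀ i, Real.sqrt (f i) ^ 2 = f i := fun i => Real.sq_sqrt (hf0 i)
    have e3 : ∀ i, (Real.sqrt (f i) * |y i|) ^ 2 = f i * y i ^ 2 := by
      intro i
      rw [mul_pow, e2, sq_abs]
    simp only [e1, e2, e3] at hcs
    rw [hfs, one_mul] at hcs
    exact hcs
  have hsσ : |s| ≤ σs := by
    calc |s| ≤ ∑ i, |f i * y i| := Finset.abs_sum_le_sum_abs _ _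
    _ = σs := Finset.sum_congr rfl fun i _ => by
        rw [abs_mul, abs_of_nonneg (hf0 i)]
  have htσ : |t| ≤ 3 * σs := by
    calc |t| ≤ ∑ i, |f i * (c i + f i) * y i| := Finset.abs_sum_le_sum_abs _ _
    _ ≤ ∑ i, 3 * (f i * |y i|) := Finset.sum_le_sum fun i _ => by
        rw [abs_mul, abs_mul, abs_of_nonneg (hf0 i)]
        have h1 : |c i + f i| ≤ 3 := by
          obtain ⟨hc1, hc2⟩ := abs_le.mp (hci i); rw [abs_le]
          exact ⟨by linarith [hf0 i], by linarith [hf1 i]⟩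
        have h2 := mul_le_mul_of_nonneg_right
          (mul_le_mul_of_nonneg_left h1 (hf0 i)) (abs_nonneg (y i))
        nlinarith [h2]
    _ = 3 * σs := by rw [hσsdef, Finset.mul_sum]
  -- expand the quadratic form of Bmat
  have hBeq : Bmat A₁ A₂ b x = BmatAbs f c := by
    rw [hf, hc]; rfl
  have hBquad : y ⬝ᵥ (Bmat A₁ A₂ b x *ᵥ y) =
      (∑ i, f i * (f i + c i) * y i ^ 2) - t * s - s * t
        + (∑ i, (2 * c i + f i) * f i) * s ^ 2
        - (∑ i, c i * f i) * Q := by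
    rw [hBeq, quadB, htdef, hsdef, hQdef]
  -- bounds on K and L
  have hK : |∑ i, (2 * c i + f i) * f i| ≤ 5 := by
    calc |∑ i, (2 * c i + f i) * f i| ≤ ∑ i, |(2 * c i + f i) * f i| :=
        Finset.abs_sum_le_sum_abs _ _
    _ ≤ ∑ i, 5 * f i := Finset.sum_le_sum fun i _ => by
        rw [abs_mul, abs_of_nonneg (hf0 i)]
        have h1 : |2 * c i + f i| ≤ 5 := by
          obtain ⟨hc1, hc2⟩ := abs_le.mp (hci i); rw [abs_le]
          exact ⟨by linarith [hf0 i], by linarith [hf1 i]⟩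
        have h2 := mul_le_mul_of_nonneg_right h1 (hf0 i)
        linarith [h2]
    _ = 5 := by rw [← Finset.mul_sum, hfs, mul_one]
  have hL : |∑ i, c i * f i| ≤ 2 := by
    calc |∑ i, c i * f i| ≤ ∑ i, |c i * f i| := Finset.abs_sum_le_sum_abs _ _
    _ ≤ ∑ i, 2 * f i := Finset.sum_le_sum fun i _ => by
        rw [abs_mul, abs_of_nonneg (hf0 i)]
        have h2 := mul_le_mul_of_nonneg_right (hci i) (hf0 i)
        linarith [h2]
    _ = 2 := by rw [← Finset.mul_sum, hfs, mul_one]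
  -- bound on the first term
  have hT1 : -(3 * Q) ≤ ∑ i, f i * (f i + c i) * y i ^ 2 := by
    have hh : ∀ i ∈ (Finset.univ : Finset (Fin m)),
        (-3 : ℝ) * (f i * y i ^ 2) ≤ f i * (f i + c i) * y i ^ 2 := by
      intro i _
      obtain ⟨h1, h2⟩ := abs_le.mp (hci i)
      have key : (-3 : ℝ) * f i ≤ f i * (f i + c i) := by
        nlinarith [hf0 i, mul_le_mul_of_nonneg_left h1 (hf0 i), sq_nonneg (f i)]
      have h3 := mul_le_mul_of_nonneg_right key (sq_nonneg (y i))
      nlinarith [h3]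
    have h4 := Finset.sum_le_sum hh
    have e : -(3 * Q) = ∑ i, (-3 : ℝ) * (f i * y i ^ 2) := by
      rw [hQdef, Finset.mul_sum, ← Finset.sum_neg_distrib]
      exact Finset.sum_congr rfl fun i _ => by ring
    linarith [h4, e]
  -- combine: lower bound for Bmat quadratic form
  have hsQ : s ^ 2 ≤ Q := by
    have : s ^ 2 ≤ σs ^ 2 := by nlinarith [hsσ, abs_nonneg s, sq_abs s]
    linarith
  have htsQ : |t * s| ≤ 3 * Q := by
    have h1 : |t * s| ≤ 3 * σs * σs := by
      rw [abs_mul]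
      have h0 : 0 ≤ σs := le_trans (abs_nonneg s) hsσ
      nlinarith [abs_nonneg t, abs_nonneg s, htσ, hsσ]
    have h2 : 3 * σs * σs ≤ 3 * Q := by nlinarith [hσsQ]
    linarith
  have hBlow : -(16 * N2) ≤ y ⬝ᵥ (Bmat A₁ A₂ b x *ᵥ y) := by
    rw [hBquad]
    have hKs : -(5 * Q) ≤ (∑ i, (2 * c i + f i) * f i) * s ^ 2 := by
      have := abs_le.mp hK
      nlinarith [sq_nonneg s, hsQ, this.1]
    have hLQ : (∑ i, c i * f i) * Q ≤ 2 * Q := by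
      have := abs_le.mp hL
      nlinarith [hQ0, this.2]
    obtain ⟨hts1, hts2⟩ := abs_le.mp htsQ
    linarith [hT1, hKs, hLQ, hQN]
  -- diagonal part
  have hWlow : (20 + l / σmin ^ 2) * N2 ≤ y ⬝ᵥ (Matrix.diagonal (fun i => w i ^ 2) *ᵥ y) := by
    rw [quad_diag]
    calc (20 + l / σmin ^ 2) * N2 = ∑ i, (20 + l / σmin ^ 2) * y i ^ 2 := by
          rw [hN2def, Finset.mul_sum]
    _ ≤ ∑ i, w i ^ 2 * y i ^ 2 := Finset.sum_le_sum fun i _ => by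
          nlinarith [hw i, sq_nonneg (y i)]
  -- relation between N2 and ‖v‖
  have hN : σmin ^ 2 * ‖v‖ ^ 2 ≤ N2 := by
    have h0 : ‖mulE C v‖ ^ 2 = N2 := by
      rw [EuclideanSpace.norm_eq, Real.sq_sqrt (by positivity), hN2def]
      exact Finset.sum_congr rfl fun i _ => by
        rw [Real.norm_eq_abs, sq_abs]; rfl
    have h1 := hσ v
    nlinarith [norm_nonneg v, mul_nonneg hσpos.le (norm_nonneg v)]
  -- final assembly
  have hsplit : y ⬝ᵥ (M *ᵥ y) = y ⬝ᵥ (Bmat A₁ A₂ b x *ᵥ y)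
      + y ⬝ᵥ (Matrix.diagonal (fun i => w i ^ 2) *ᵥ y) := by
    rw [hM, Matrix.add_mulVec, dotProduct_add]
  rw [hsplit]
  have hdiv : 0 ≤ l / σmin ^ 2 := div_nonneg hl.le (sq_nonneg _)
  have hkey : l / σmin ^ 2 * (σmin ^ 2 * ‖v‖ ^ 2) = l * ‖v‖ ^ 2 := by
    field_simp
  have h2 : l / σmin ^ 2 * (σmin ^ 2 * ‖v‖ ^ 2) ≤ l / σmin ^ 2 * N2 :=
    mul_le_mul_of_nonneg_left hN hdiv
  have h3 : (20 + l / σmin ^ 2) * N2 = 20 * N2 + l / σmin ^ 2 * N2 := by ring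
  linarith [hBlow, hWlow]

end
end

section
/- Let L : ℝ^d → ℝ be twice continuously differentiable and strictly convex, with everywhere positive definite Hessian ∇²L, a global minimizer x* with ∇L(x*) = 0, and suppose there is N ≥ 1 such that ‖(∇²L(x))⁻¹ ∇²L(y)‖ ≤ N for all x, y ∈ ℝ^d. Then for any z ∈ ℝ^d, the initial value problem x'(t) = −(∇²L(x(t)))⁻¹ ∇L(z), x(0) = z, has at least one solution x : [0,1] → ℝ^d, and this solution satisfies ∇L(x(t)) = (1 − t) ∇L(z) for all t ∈ [0,1] and x(1) = x*. -/
open RealInnerProductSpace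

noncomputable section

/-- The Hessian of `L` at `x`, as a continuous linear map: the Fréchet derivative of
the gradient of `L`. -/
def Hess {d : ℕ} (L : EuclideanSpace ℝ (Fin d) → ℝ) (x : EuclideanSpace ℝ (Fin d)) :
    EuclideanSpace ℝ (Fin d) →L[ℝ] EuclideanSpace ℝ (Fin d) :=
  fderiv ℝ (gradient L) x

set_option maxHeartbeats 1000000 in
/-- under C², strict convexity, positive definite Hessian, a global
minimizer x* with vanishing gradient, and ‖(∇²L(x))⁻¹ ∇²L(y)‖ ≤ N everywhere, the
IVP x'(t) = −(∇²L(x(t)))⁻¹ ∇L(z), x(0) = z has a solution on [0,1] satisfying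
∇L(x(t)) = (1 − t) ∇L(z) and x(1) = x*. -/
theorem statement16 (d : ℕ) (hd : 0 < d) (L : EuclideanSpace ℝ (Fin d) → ℝ)
    (hL : ContDiff ℝ 2 L)
    (hconv : StrictConvexOn ℝ Set.univ L)
    (hPD : ∀ x v : EuclideanSpace ℝ (Fin d), v ≠ 0 → 0 < ⟪v, Hess L x v⟫)
    (xstar : EuclideanSpace ℝ (Fin d))
    (hmin : ∀ y, L xstar ≤ L y) (hcrit : gradient L xstar = 0)
    (N : ℝ) (hN : 1 ≤ N)
    (hbound : ∀ x y, ‖(Hess L x).inverse.comp (Hess L y)‖ ≤ N)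
    (z : EuclideanSpace ℝ (Fin d)) :
    ∃ γ : ℝ → EuclideanSpace ℝ (Fin d),
      γ 0 = z ∧
      (∀ t ∈ Set.Icc (0 : ℝ) 1,
        HasDerivWithinAt γ (-(Hess L (γ t)).inverse (gradient L z))
          (Set.Icc (0 : ℝ) 1) t) ∧
      (∀ t ∈ Set.Icc (0 : ℝ) 1, gradient L (γ t) = (1 - t) • gradient L z) ∧
      γ 1 = xstar := by
  classical
  -- the gradient map
  set g : (EuclideanSpace ℝ (Fin d)) → (EuclideanSpace ℝ (Fin d)) := gradient L with hgdef
  -- gradient is C¹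
  have hgrad_eq : g = fun x => (InnerProductSpace.toDual ℝ (EuclideanSpace ℝ (Fin d))).symm (fderiv ℝ L x) := rfl
  have hg1 : ContDiff ℝ 1 g := by
    rw [hgrad_eq]
    exact ((InnerProductSpace.toDual ℝ (EuclideanSpace ℝ (Fin d))).symm.toContinuousLinearEquiv :
      _ ≃L[ℝ] (EuclideanSpace ℝ (Fin d))).contDiff.comp (hL.fderiv_right (by norm_num))
  have hgdiff : Differentiable ℝ g := hg1.differentiable one_ne_zero
  have hdg : ∀ x : (EuclideanSpace ℝ (Fin d)), HasFDerivAt g (Hess L x) x := fun x => (hgdiff x).hasFDerivAt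
  -- symmetry of the Hessian
  have hsymm : ∀ x u v : (EuclideanSpace ℝ (Fin d)), ⟪u, Hess L x v⟫ = ⟪v, Hess L x u⟫ := by
    intro x u v
    have hfd : ∀ y : (EuclideanSpace ℝ (Fin d)), HasFDerivAt L (fderiv ℝ L y) y := fun y =>
      (hL.differentiable two_ne_zero y).hasFDerivAt
    have hf1 : ContDiff ℝ 1 (fderiv ℝ L) := hL.fderiv_right (by norm_num)
    have hx : HasFDerivAt (fderiv ℝ L) (fderiv ℝ (fderiv ℝ L) x) x :=
      (hf1.differentiable one_ne_zero x).hasFDerivAt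
    have hsecond := second_derivative_symmetric hfd hx
    have hHess : ∀ w : (EuclideanSpace ℝ (Fin d)), Hess L x w =
        (InnerProductSpace.toDual ℝ (EuclideanSpace ℝ (Fin d))).symm (fderiv ℝ (fderiv ℝ L) x w) := by
      intro w
      have : Hess L x = fderiv ℝ ((InnerProductSpace.toDual ℝ (EuclideanSpace ℝ (Fin d))).symm ∘ (fderiv ℝ L)) x := rfl
      rw [this, LinearIsometryEquiv.comp_fderiv]
      rfl
    rw [real_inner_comm (Hess L x v) u, real_inner_comm (Hess L x u) v, hHess v, hHess u,
      InnerProductSpace.toDual_symm_apply, InnerProductSpace.toDual_symm_apply]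
    exact hsecond v u
  -- Hessian is bijective
  have hbij : ∀ x : (EuclideanSpace ℝ (Fin d)), Function.Bijective (Hess L x) := by
    intro x
    have hinj : Function.Injective (Hess L x) := by
      intro a b hab
      by_contra hne
      have hv : a - b ≠ 0 := sub_ne_zero.2 hne
      have := hPD x (a - b) hv
      rw [map_sub, hab, sub_self, inner_zero_right] at this
      exact lt_irrefl 0 this
    refine ⟨hinj, ?_⟩
    have := (LinearMap.injective_iff_surjective
      (f := ((Hess L x : (EuclideanSpace ℝ (Fin d)) →L[ℝ] (EuclideanSpace ℝ (Fin d))) : (EuclideanSpace ℝ (Fin d)) →ₗ[ℝ] (EuclideanSpace ℝ (Fin d))))).mp hinj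
    exact this
  -- the Hessian as a continuous linear equivalence
  let A : (EuclideanSpace ℝ (Fin d)) → ((EuclideanSpace ℝ (Fin d)) ≃L[ℝ] (EuclideanSpace ℝ (Fin d))) := fun x =>
    (LinearEquiv.ofBijective ((Hess L x : (EuclideanSpace ℝ (Fin d)) →L[ℝ] (EuclideanSpace ℝ (Fin d))) : (EuclideanSpace ℝ (Fin d)) →ₗ[ℝ] (EuclideanSpace ℝ (Fin d)))
      (hbij x)).toContinuousLinearEquiv
  have hA : ∀ x : (EuclideanSpace ℝ (Fin d)), ((A x : (EuclideanSpace ℝ (Fin d)) ≃L[ℝ] (EuclideanSpace ℝ (Fin d))) : (EuclideanSpace ℝ (Fin d)) →L[ℝ] (EuclideanSpace ℝ (Fin d))) = Hess L x := by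
    intro x; ext v; rfl
  have hAapp : ∀ x v, A x v = Hess L x v := fun x v => rfl
  have hinv : ∀ x : (EuclideanSpace ℝ (Fin d)), (Hess L x).inverse = ((A x).symm : (EuclideanSpace ℝ (Fin d)) →L[ℝ] (EuclideanSpace ℝ (Fin d))) := by
    intro x
    rw [← hA x, ContinuousLinearMap.inverse_equiv]
  -- uniform bound on the inverse Hessian
  set C : ℝ := N * ‖((A z).symm : (EuclideanSpace ℝ (Fin d)) →L[ℝ] (EuclideanSpace ℝ (Fin d)))‖ with hCdef
  have hAzpos : 0 < ‖((A z).symm : (EuclideanSpace ℝ (Fin d)) →L[ℝ] (EuclideanSpace ℝ (Fin d)))‖ := by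
    have : Nontrivial (EuclideanSpace ℝ (Fin d)) := by
      have : 0 < Module.finrank ℝ (EuclideanSpace ℝ (Fin d)) := by
        simpa [finrank_euclideanSpace] using hd
      exact Module.nontrivial_of_finrank_pos this
    obtain ⟨v, hv⟩ := exists_ne (0 : (EuclideanSpace ℝ (Fin d)))
    have hv' : (A z).symm v ≠ 0 := by
      intro h
      apply hv
      have := congrArg (A z) h
      rwa [ContinuousLinearEquiv.apply_symm_apply, map_zero] at this
    have := ((A z).symm : (EuclideanSpace ℝ (Fin d)) →L[ℝ] (EuclideanSpace ℝ (Fin d))).le_opNorm v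
    by_contra hle
    push_neg at hle
    have h0 : ‖((A z).symm : (EuclideanSpace ℝ (Fin d)) →L[ℝ] (EuclideanSpace ℝ (Fin d)))‖ = 0 := le_antisymm hle (norm_nonneg _)
    rw [h0, zero_mul] at this
    exact hv' (norm_le_zero_iff.mp this)
  have hCpos : 0 < C := mul_pos (lt_of_lt_of_le one_pos hN) hAzpos
  have hC : ∀ x : (EuclideanSpace ℝ (Fin d)), ‖((A x).symm : (EuclideanSpace ℝ (Fin d)) →L[ℝ] (EuclideanSpace ℝ (Fin d)))‖ ≤ C := by
    intro x
    have hcomp : ((A x).symm : (EuclideanSpace ℝ (Fin d)) →L[ℝ] (EuclideanSpace ℝ (Fin d))) =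
        (((Hess L x).inverse.comp (Hess L z)).comp ((A z).symm : (EuclideanSpace ℝ (Fin d)) →L[ℝ] (EuclideanSpace ℝ (Fin d)))) := by
      refine ContinuousLinearMap.ext fun v => ?_
      simp only [ContinuousLinearMap.comp_apply, hinv x, ContinuousLinearEquiv.coe_coe]
      congr 1
      have : Hess L z ((A z).symm v) = A z ((A z).symm v) := (hAapp z _).symm
      rw [this, ContinuousLinearEquiv.apply_symm_apply]
    rw [hcomp]
    calc ‖(((Hess L x).inverse.comp (Hess L z)).comp ((A z).symm : (EuclideanSpace ℝ (Fin d)) →L[ℝ] (EuclideanSpace ℝ (Fin d))))‖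
        ≤ ‖(Hess L x).inverse.comp (Hess L z)‖ * ‖((A z).symm : (EuclideanSpace ℝ (Fin d)) →L[ℝ] (EuclideanSpace ℝ (Fin d)))‖ :=
          ContinuousLinearMap.opNorm_comp_le _ _
      _ ≤ N * ‖((A z).symm : (EuclideanSpace ℝ (Fin d)) →L[ℝ] (EuclideanSpace ℝ (Fin d)))‖ :=
          mul_le_mul_of_nonneg_right (hbound x z) (norm_nonneg _)
  -- quantitative positive definiteness
  have hPD0 : ∀ x (v : (EuclideanSpace ℝ (Fin d))), 0 ≤ ⟪v, Hess L x v⟫ := by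
    intro x v
    rcases eq_or_ne v 0 with rfl | hv
    · simp
    · exact (hPD x v hv).le
  have hquant : ∀ x (v : (EuclideanSpace ℝ (Fin d))), ‖v‖ ^ 2 / C ≤ ⟪v, Hess L x v⟫ := by
    intro x v
    rcases eq_or_ne v 0 with rfl | hv
    · simp
    · set u : (EuclideanSpace ℝ (Fin d)) := (A x).symm v with hu
      have hHu : Hess L x u = v := by
        rw [← hAapp x u, hu, ContinuousLinearEquiv.apply_symm_apply]
      -- Cauchy–Schwarz for the bilinear form
      have hcs : (2 * ⟪u, Hess L x v⟫) ^ 2 -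
          4 * ⟪v, Hess L x v⟫ * ⟪u, Hess L x u⟫ ≤ 0 := by
        have hdisc := discrim_le_zero (a := ⟪v, Hess L x v⟫) (b := 2 * ⟪u, Hess L x v⟫)
          (c := ⟪u, Hess L x u⟫) ?_
        · rw [discrim] at hdisc; linarith
        · intro t
          have hexp : ⟪u + t • v, Hess L x (u + t • v)⟫ =
              ⟪v, Hess L x v⟫ * (t * t) + (2 * ⟪u, Hess L x v⟫) * t + ⟪u, Hess L x u⟫ := by
            simp only [map_add, map_smul, inner_add_left, inner_add_right,
              real_inner_smul_left, real_inner_smul_right, hsymm x v u]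
            ring
          rw [← hexp]
          exact hPD0 x _
      have huv : ⟪u, Hess L x v⟫ = ‖v‖ ^ 2 := by
        rw [hsymm x u v, hHu, real_inner_self_eq_norm_sq]
      have huu : ⟪u, Hess L x u⟫ ≤ C * ‖v‖ ^ 2 := by
        rw [hHu]
        calc ⟪u, v⟫ ≤ ‖u‖ * ‖v‖ := real_inner_le_norm u v
          _ ≤ (C * ‖v‖) * ‖v‖ := by
              apply mul_le_mul_of_nonneg_right _ (norm_nonneg v)
              calc ‖u‖ ≤ ‖((A x).symm : (EuclideanSpace ℝ (Fin d)) →L[ℝ] (EuclideanSpace ℝ (Fin d)))‖ * ‖v‖ :=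
                    ((A x).symm : (EuclideanSpace ℝ (Fin d)) →L[ℝ] (EuclideanSpace ℝ (Fin d))).le_opNorm v
                _ ≤ C * ‖v‖ := mul_le_mul_of_nonneg_right (hC x) (norm_nonneg v)
          _ = C * ‖v‖ ^ 2 := by ring
      have hvpos : 0 < ‖v‖ ^ 2 := pow_pos (norm_pos_iff.mpr hv) 2
      have h4 : ‖v‖ ^ 2 * ‖v‖ ^ 2 ≤ ⟪v, Hess L x v⟫ * ⟪u, Hess L x u⟫ := by
        nlinarith [hcs, huv]
      have h5 : ⟪v, Hess L x v⟫ * ⟪u, Hess L x u⟫ ≤ ⟪v, Hess L x v⟫ * (C * ‖v‖ ^ 2) :=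
        mul_le_mul_of_nonneg_left huu (hPD0 x v)
      have h6 : ‖v‖ ^ 2 * ‖v‖ ^ 2 ≤ (⟪v, Hess L x v⟫ * C) * ‖v‖ ^ 2 := by nlinarith [h4, h5]
      rw [div_le_iff₀ hCpos]
      exact le_of_mul_le_mul_right h6 hvpos
  -- strong monotonicity of the gradient
  have hmono : ∀ x y : (EuclideanSpace ℝ (Fin d)), ‖x - y‖ ^ 2 / C ≤ ⟪g x - g y, x - y⟫ := by
    intro x y
    set v : (EuclideanSpace ℝ (Fin d)) := x - y with hvdef
    set F : ℝ → ℝ := fun s => ⟪g (y + s • v), v⟫ - s * (‖v‖ ^ 2 / C) with hFdef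
    have hcF : ∀ s : ℝ, HasDerivAt (fun s : ℝ => y + s • v) v s := by
      intro s
      simpa using ((hasDerivAt_id s).smul_const v).const_add y
    have hgF : ∀ s : ℝ, HasDerivAt (fun s : ℝ => g (y + s • v))
        (Hess L (y + s • v) v) s := fun s => (hdg _).comp_hasDerivAt s (hcF s)
    have hF' : ∀ s : ℝ, HasDerivAt F (⟪Hess L (y + s • v) v, v⟫ - ‖v‖ ^ 2 / C) s := by
      intro s
      have h1 : HasDerivAt (fun s : ℝ => ⟪g (y + s • v), v⟫)
          (⟪Hess L (y + s • v) v, v⟫) s := by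
        simpa using (hgF s).inner ℝ (hasDerivAt_const s v)
      have h2 : HasDerivAt (fun s : ℝ => s * (‖v‖ ^ 2 / C)) (‖v‖ ^ 2 / C) s := by
        simpa using (hasDerivAt_id s).mul_const (‖v‖ ^ 2 / C)
      exact h1.sub h2
    have hFmono : Monotone F := by
      apply monotone_of_deriv_nonneg
      · exact fun s => (hF' s).differentiableAt
      · intro s
        rw [(hF' s).deriv]
        have := hquant (y + s • v) v
        rw [real_inner_comm]
        linarith
    have h01 := hFmono (zero_le_one)
    simp only [hFdef, zero_smul, add_zero, zero_mul, sub_zero, one_smul, one_mul] at h01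
    have hyv : y + v = x := by rw [hvdef]; abel
    rw [hyv] at h01
    rw [inner_sub_left]
    linarith
  -- lower bound on gradient increments
  have hlow : ∀ x y : (EuclideanSpace ℝ (Fin d)), ‖x - y‖ ≤ C * ‖g x - g y‖ := by
    intro x y
    rcases eq_or_ne x y with rfl | hxy
    · simp
    · have hv : (0:ℝ) < ‖x - y‖ := by
        rw [norm_pos_iff]; exact sub_ne_zero.2 hxy
      have h1 := hmono x y
      have h2 : ⟪g x - g y, x - y⟫ ≤ ‖g x - g y‖ * ‖x - y‖ := real_inner_le_norm _ _
      have : ‖x - y‖ ^ 2 / C ≤ ‖g x - g y‖ * ‖x - y‖ := le_trans h1 h2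
      rw [div_le_iff₀ hCpos] at this
      nlinarith
  have hginj : Function.Injective g := by
    intro x y hxy
    have h := hlow x y
    rw [hxy, sub_self, norm_zero, mul_zero] at h
    have h2 := le_antisymm h (norm_nonneg _)
    rwa [norm_eq_zero, sub_eq_zero] at h2
  -- upper bound on the Hessian norm, Lipschitz continuity
  set M : ℝ := ‖Hess L z‖ * N with hMdef
  have hMnn : 0 ≤ M := mul_nonneg (norm_nonneg _) (le_trans zero_le_one hN)
  have hHessBound : ∀ y : (EuclideanSpace ℝ (Fin d)), ‖Hess L y‖ ≤ M := by
    intro y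
    apply ContinuousLinearMap.opNorm_le_bound _ hMnn
    intro v
    have hrw : Hess L y v = Hess L z (((Hess L z).inverse.comp (Hess L y)) v) := by
      simp only [ContinuousLinearMap.comp_apply, hinv z, ContinuousLinearEquiv.coe_coe]
      have : Hess L z ((A z).symm (Hess L y v)) = A z ((A z).symm (Hess L y v)) :=
        (hAapp z _).symm
      rw [this, ContinuousLinearEquiv.apply_symm_apply]
    rw [hrw]
    calc ‖Hess L z (((Hess L z).inverse.comp (Hess L y)) v)‖
        ≤ ‖Hess L z‖ * ‖((Hess L z).inverse.comp (Hess L y)) v‖ :=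
          (Hess L z).le_opNorm _
      _ ≤ ‖Hess L z‖ * (‖(Hess L z).inverse.comp (Hess L y)‖ * ‖v‖) := by
          exact mul_le_mul_of_nonneg_left (ContinuousLinearMap.le_opNorm _ _) (norm_nonneg _)
      _ ≤ ‖Hess L z‖ * (N * ‖v‖) := by
          apply mul_le_mul_of_nonneg_left _ (norm_nonneg _)
          exact mul_le_mul_of_nonneg_right (hbound z y) (norm_nonneg v)
      _ = M * ‖v‖ := by ring
  have hglip : LipschitzWith M.toNNReal g := by
    apply lipschitzWith_of_nnnorm_fderiv_le hgdiff
    intro x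
    have : ‖fderiv ℝ g x‖ ≤ M := hHessBound x
    refine (Real.le_toNNReal_iff_coe_le hMnn).mpr ?_
    rw [coe_nnnorm]
    exact this
  have hgalip : AntilipschitzWith C.toNNReal g := by
    apply AntilipschitzWith.of_le_mul_dist
    intro x y
    rw [dist_eq_norm, dist_eq_norm]
    calc ‖x - y‖ ≤ C * ‖g x - g y‖ := hlow x y
      _ = (C.toNNReal : ℝ) * ‖g x - g y‖ := by rw [Real.coe_toNNReal _ hCpos.le]
  -- strict derivative at every point
  have hstrict : ∀ x : (EuclideanSpace ℝ (Fin d)), HasStrictFDerivAt g ((A x : (EuclideanSpace ℝ (Fin d)) ≃L[ℝ] (EuclideanSpace ℝ (Fin d))) : (EuclideanSpace ℝ (Fin d)) →L[ℝ] (EuclideanSpace ℝ (Fin d))) x := by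
    intro x
    rw [hA x]
    exact hg1.contDiffAt.hasStrictFDerivAt one_ne_zero
  -- range of g is clopen, hence everything
  have hopen : IsOpen (Set.range g) :=
    (isOpenMap_of_hasStrictFDerivAt_equiv (f' := A) hstrict).isOpen_range
  have hclosed : IsClosed (Set.range g) :=
    hgalip.isClosed_range hglip.uniformContinuous
  have hrange : Set.range g = Set.univ := by
    apply IsClopen.eq_univ ⟨hclosed, hopen⟩
    exact ⟨g z, Set.mem_range_self z⟩
  have hgsurj : Function.Surjective g := Set.range_eq_univ.mp hrange
  -- the global inverse
  set e : (EuclideanSpace ℝ (Fin d)) ≃ (EuclideanSpace ℝ (Fin d)) := Equiv.ofBijective g ⟨hginj, hgsurj⟩ with hedef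
  have heapp : ∀ x, e x = g x := fun x => rfl
  set γ : ℝ → (EuclideanSpace ℝ (Fin d)) := fun t => e.symm ((1 - t) • g z) with hγdef
  have hgγ : ∀ t : ℝ, g (γ t) = (1 - t) • g z := by
    intro t
    have := e.apply_symm_apply ((1 - t) • g z)
    rwa [heapp] at this
  have hγ0 : γ 0 = z := by
    have : γ 0 = e.symm (g z) := by simp [hγdef]
    rw [this, ← heapp, e.symm_apply_apply]
  have hγ1 : γ 1 = xstar := by
    have h0 : g xstar = 0 := hcrit
    have : γ 1 = e.symm 0 := by simp [hγdef]
    rw [this, ← h0, ← heapp, e.symm_apply_apply]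
  refine ⟨γ, hγ0, ?_, fun t _ => hgγ t, hγ1⟩
  intro t _
  -- derivative of γ
  have hleft : ∀ᶠ x in nhds (γ t), e.symm (g x) = x :=
    Filter.Eventually.of_forall fun x => by rw [← heapp, e.symm_apply_apply]
  have hinvderiv : HasStrictFDerivAt (⇑e.symm)
      (((A (γ t)).symm : (EuclideanSpace ℝ (Fin d)) ≃L[ℝ] (EuclideanSpace ℝ (Fin d))) : (EuclideanSpace ℝ (Fin d)) →L[ℝ] (EuclideanSpace ℝ (Fin d))) (g (γ t)) :=
    (hstrict (γ t)).to_local_left_inverse hleft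
  have hc : HasDerivAt (fun s : ℝ => (1 - s) • g z) (-g z) t := by
    have h1 : HasDerivAt (fun s : ℝ => (1 : ℝ) - s) (-1 : ℝ) t := by
      simpa using (hasDerivAt_id' t).const_sub (1:ℝ)
    have := h1.smul_const (g z)
    simpa using this
  have hpt : g (γ t) = (1 - t) • g z := hgγ t
  rw [hpt] at hinvderiv
  have hcomp : HasDerivAt γ ((A (γ t)).symm (-g z)) t := by
    exact hinvderiv.hasFDerivAt.comp_hasDerivAt t hc
  have hre : (A (γ t)).symm (-g z) = -(Hess L (γ t)).inverse (gradient L z) := by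
    rw [hinv (γ t)]
    simp [hgdef]
  rw [hre] at hcomp
  exact hcomp.hasDerivWithinAt

end
end

section
/- Let L : ℝ^d → ℝ be twice continuously differentiable and strictly convex, with everywhere positive definite Hessian ∇²L, a global minimizer x* with ∇L(x*) = 0 and L_min := L(x*), and suppose there is N ≥ 1 such that ‖(∇²L(x))⁻¹ ∇²L(y)‖ ≤ N for all x, y ∈ ℝ^d. Then for every z ∈ ℝ^d, (2/N) · (L(z) − L_min) ≤ ⟨∇L(z), (∇²L(z))⁻¹ ∇L(z)⟩ ≤ 2N · (L(z) − L_min). -/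
open RealInnerProductSpace

noncomputable section

variable {d : ℕ} {L : EuclideanSpace ℝ (Fin d) → ℝ}


lemma grad_eq (x v : EuclideanSpace ℝ (Fin d)) :
    ⟪gradient L x, v⟫ = fderiv ℝ L x v := by
  rw [gradient, InnerProductSpace.toDual_symm_apply]

lemma grad_contDiff (hL : ContDiff ℝ 2 L) :
    ContDiff ℝ 1 (gradient L) := by
  have h1 : ContDiff ℝ 1 (fderiv ℝ L) := hL.fderiv_right (by norm_num)
  exact (InnerProductSpace.toDual ℝ _).symm.toContinuousLinearEquiv.contDiff.comp h1

lemma grad_hasFDerivAt (hL : ContDiff ℝ 2 L) (x : EuclideanSpace ℝ (Fin d)) :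
    HasFDerivAt (gradient L) (Hess L x) x :=
  ((grad_contDiff hL).differentiable one_ne_zero x).hasFDerivAt

lemma hess_symm (hL : ContDiff ℝ 2 L) (x u v : EuclideanSpace ℝ (Fin d)) :
    ⟪Hess L x u, v⟫ = ⟪u, Hess L x v⟫ := by
  have hdiff : Differentiable ℝ L := hL.differentiable (by norm_num)
  have hf : ∀ y, HasFDerivAt L (fderiv ℝ L y) y := fun y => (hdiff y).hasFDerivAt
  have h1 : ContDiff ℝ 1 (fderiv ℝ L) := hL.fderiv_right (by norm_num)
  have hx : HasFDerivAt (fderiv ℝ L) (fderiv ℝ (fderiv ℝ L) x) x :=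
    ((h1.differentiable one_ne_zero) x).hasFDerivAt
  set f'' := fderiv ℝ (fderiv ℝ L) x with hf''
  have hsymm : ∀ a b : EuclideanSpace ℝ (Fin d), f'' a b = f'' b a :=
    fun a b => second_derivative_symmetric hf hx a b
  -- Hess L x = toDual.symm ∘L f''
  set e : StrongDual ℝ (EuclideanSpace ℝ (Fin d)) ≃L[ℝ] EuclideanSpace ℝ (Fin d) :=
    (InnerProductSpace.toDual ℝ (EuclideanSpace ℝ (Fin d))).symm.toContinuousLinearEquiv with he
  have hgrad : gradient L = fun y => e (fderiv ℝ L y) := rfl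
  have hH : HasFDerivAt (gradient L) ((e : StrongDual ℝ (EuclideanSpace ℝ (Fin d)) →L[ℝ] EuclideanSpace ℝ (Fin d)).comp f'') x := by
    rw [hgrad]
    exact (e.toContinuousLinearMap.hasFDerivAt.comp x hx)
  have hHe : Hess L x = (e : StrongDual ℝ (EuclideanSpace ℝ (Fin d)) →L[ℝ] EuclideanSpace ℝ (Fin d)).comp f'' := hH.fderiv
  have key : ∀ a b : EuclideanSpace ℝ (Fin d), ⟪Hess L x a, b⟫ = f'' a b := by
    intro a b
    rw [hHe]
    show ⟪(InnerProductSpace.toDual ℝ (EuclideanSpace ℝ (Fin d))).symm (f'' a), b⟫ = f'' a b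
    rw [InnerProductSpace.toDual_symm_apply]
  rw [key, real_inner_comm, key, hsymm]

lemma hess_inj (hPD : ∀ x v : EuclideanSpace ℝ (Fin d), v ≠ 0 → 0 < ⟪v, Hess L x v⟫)
    (x : EuclideanSpace ℝ (Fin d)) : (Hess L x).ker = ⊥ := by
  apply LinearMap.ker_eq_bot.mpr
  intro v w hvw
  change Hess L x v = Hess L x w at hvw
  by_contra hne
  have h0 : Hess L x (v - w) = 0 := by rw [map_sub, hvw, sub_self]
  have := hPD x (v - w) (sub_ne_zero.mpr hne)
  rw [h0, inner_zero_right] at this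
  exact lt_irrefl 0 this

lemma hess_surj (hPD : ∀ x v : EuclideanSpace ℝ (Fin d), v ≠ 0 → 0 < ⟪v, Hess L x v⟫)
    (x : EuclideanSpace ℝ (Fin d)) : (Hess L x).range = ⊤ := by
  apply LinearMap.range_eq_top.mpr
  exact LinearMap.injective_iff_surjective.mp (LinearMap.ker_eq_bot.mp (hess_inj hPD x))

/-- The Hessian as a continuous linear equivalence. -/
def hessEquiv (hPD : ∀ x v : EuclideanSpace ℝ (Fin d), v ≠ 0 → 0 < ⟪v, Hess L x v⟫)
    (x : EuclideanSpace ℝ (Fin d)) :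
    EuclideanSpace ℝ (Fin d) ≃L[ℝ] EuclideanSpace ℝ (Fin d) :=
  ContinuousLinearEquiv.ofBijective (Hess L x) (hess_inj hPD x) (hess_surj hPD x)

lemma hess_inverse (hPD : ∀ x v : EuclideanSpace ℝ (Fin d), v ≠ 0 → 0 < ⟪v, Hess L x v⟫)
    (x : EuclideanSpace ℝ (Fin d)) :
    (Hess L x).inverse = ↑(hessEquiv hPD x).symm := by
  have : Hess L x = ↑(hessEquiv hPD x) :=
    (ContinuousLinearEquiv.coe_ofBijective _ _ _).symm
  rw [this, ContinuousLinearMap.inverse_equiv]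

lemma hess_inv_left (hPD : ∀ x v : EuclideanSpace ℝ (Fin d), v ≠ 0 → 0 < ⟪v, Hess L x v⟫)
    (x v : EuclideanSpace ℝ (Fin d)) :
    (Hess L x).inverse (Hess L x v) = v := by
  rw [hess_inverse hPD x]
  have : Hess L x v = (hessEquiv hPD x) v := by
    rw [hessEquiv]; exact congrFun (ContinuousLinearEquiv.coeFn_ofBijective _ _ _).symm v
  rw [this]
  exact (hessEquiv hPD x).symm_apply_apply v

lemma hess_inv_right (hPD : ∀ x v : EuclideanSpace ℝ (Fin d), v ≠ 0 → 0 < ⟪v, Hess L x v⟫)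
    (x v : EuclideanSpace ℝ (Fin d)) :
    Hess L x ((Hess L x).inverse v) = v := by
  rw [hess_inverse hPD x]
  have : ∀ w, Hess L x w = (hessEquiv hPD x) w := by
    intro w; rw [hessEquiv]; exact congrFun (ContinuousLinearEquiv.coeFn_ofBijective _ _ _).symm w
  rw [this]
  exact (hessEquiv hPD x).apply_symm_apply v


lemma hess_cmp (hd : 0 < d) (hL : ContDiff ℝ 2 L)
    (hPD : ∀ x v : EuclideanSpace ℝ (Fin d), v ≠ 0 → 0 < ⟪v, Hess L x v⟫)
    {N : ℝ}
    (hbound : ∀ x y, ‖(Hess L x).inverse.comp (Hess L y)‖ ≤ N)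
    (x y v : EuclideanSpace ℝ (Fin d)) :
    ⟪v, Hess L y v⟫ ≤ N * ⟪v, Hess L x v⟫ := by
  haveI : Nontrivial (EuclideanSpace ℝ (Fin d)) :=
    Module.nontrivial_of_finrank_pos (R := ℝ) (by rw [finrank_euclideanSpace_fin]; exact hd)
  set S := Hess L x with hS
  set T := Hess L y with hT
  rcases eq_or_ne v 0 with rfl | hv
  · simp
  have hscale : ∀ (c : ℝ) (w : EuclideanSpace ℝ (Fin d)) (A : EuclideanSpace ℝ (Fin d) →L[ℝ] EuclideanSpace ℝ (Fin d)),
      ⟪c • w, A (c • w)⟫ = c ^ 2 * ⟪w, A w⟫ := by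
    intro c w A
    rw [map_smul, real_inner_smul_left, real_inner_smul_right]; ring
  have contQ : Continuous fun w : EuclideanSpace ℝ (Fin d) => ⟪w, S w⟫ :=
    continuous_id.inner S.continuous
  have contR : Continuous fun w : EuclideanSpace ℝ (Fin d) => ⟪w, T w⟫ :=
    continuous_id.inner T.continuous
  -- minimum of Q on the unit sphere
  obtain ⟨w₁, hw₁s, hmin⟩ := (isCompact_sphere (0 : EuclideanSpace ℝ (Fin d)) 1).exists_isMinOn
    (NormedSpace.sphere_nonempty.mpr zero_le_one) contQ.continuousOn
  have hw₁ : w₁ ≠ 0 := by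
    intro h; rw [mem_sphere_zero_iff_norm] at hw₁s; rw [h, norm_zero] at hw₁s; norm_num at hw₁s
  set m := ⟪w₁, S w₁⟫ with hm
  have hm0 : 0 < m := hPD x w₁ hw₁
  have hQ_lb : ∀ w : EuclideanSpace ℝ (Fin d), m * ‖w‖ ^ 2 ≤ ⟪w, S w⟫ := by
    intro w
    rcases eq_or_ne w 0 with rfl | hw
    · simp
    have hn : ‖w‖ ≠ 0 := norm_ne_zero_iff.mpr hw
    have hmem : (‖w‖⁻¹ • w) ∈ Metric.sphere (0 : EuclideanSpace ℝ (Fin d)) 1 := by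
      rw [mem_sphere_zero_iff_norm, norm_smul, norm_inv, norm_norm, inv_mul_cancel₀ hn]
    have h2 : m ≤ ⟪‖w‖⁻¹ • w, S (‖w‖⁻¹ • w)⟫ := hmin hmem
    rw [hscale] at h2
    have h3 := mul_le_mul_of_nonneg_left h2 (sq_nonneg ‖w‖)
    calc m * ‖w‖ ^ 2 = ‖w‖ ^ 2 * m := by ring
    _ ≤ ‖w‖ ^ 2 * ((‖w‖⁻¹) ^ 2 * ⟪w, S w⟫) := h3
    _ = ⟪w, S w⟫ := by field_simp
  -- the set K
  set K := {w : EuclideanSpace ℝ (Fin d) | ⟪w, S w⟫ = 1} with hK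
  have hKclosed : IsClosed K := isClosed_eq contQ continuous_const
  have hKsub : K ⊆ Metric.closedBall 0 (Real.sqrt (1 / m)) := by
    intro w hw
    rw [Metric.mem_closedBall, dist_zero_right]
    have hw1 : ⟪w, S w⟫ = 1 := hw
    have h1 := hQ_lb w
    rw [hw1] at h1
    have h2 : ‖w‖ ^ 2 ≤ 1 / m := by
      rw [le_div_iff₀ hm0]; linarith
    calc ‖w‖ = Real.sqrt (‖w‖ ^ 2) := (Real.sqrt_sq (norm_nonneg w)).symm
    _ ≤ Real.sqrt (1 / m) := Real.sqrt_le_sqrt h2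
  have hKcpt : IsCompact K :=
    (isCompact_closedBall (0 : EuclideanSpace ℝ (Fin d)) _).of_isClosed_subset hKclosed hKsub
  have hKne : K.Nonempty := by
    refine ⟨(Real.sqrt ⟪v, S v⟫)⁻¹ • v, ?_⟩
    have hq : 0 < ⟪v, S v⟫ := hPD x v hv
    show ⟪_, S _⟫ = 1
    rw [hscale, inv_pow, Real.sq_sqrt hq.le, inv_mul_cancel₀ hq.ne']
  -- maximum of R on K
  obtain ⟨w₀, hw₀K, hmax⟩ := hKcpt.exists_isMaxOn hKne contR.continuousOn
  have hw₀1 : ⟪w₀, S w₀⟫ = 1 := hw₀K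
  have hw₀ : w₀ ≠ 0 := by
    intro h; rw [h] at hw₀1; simp at hw₀1
  set μ := ⟪w₀, T w₀⟫ with hμ
  have hμ0 : 0 < μ := hPD y w₀ hw₀
  have claim : ∀ u : EuclideanSpace ℝ (Fin d), ⟪u, T u⟫ ≤ μ * ⟪u, S u⟫ := by
    intro u
    rcases eq_or_ne u 0 with rfl | hu
    · simp
    have hq : 0 < ⟪u, S u⟫ := hPD x u hu
    have hmem : (Real.sqrt ⟪u, S u⟫)⁻¹ • u ∈ K := by
      show ⟪_, S _⟫ = 1
      rw [hscale, inv_pow, Real.sq_sqrt hq.le, inv_mul_cancel₀ hq.ne']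
    have h2 : ⟪(Real.sqrt ⟪u, S u⟫)⁻¹ • u, T ((Real.sqrt ⟪u, S u⟫)⁻¹ • u)⟫ ≤ μ := hmax hmem
    rw [hscale, inv_pow, Real.sq_sqrt hq.le] at h2
    calc ⟪u, T u⟫ = ⟪u, S u⟫ * ((⟪u, S u⟫)⁻¹ * ⟪u, T u⟫) := (mul_inv_cancel_left₀ hq.ne' _).symm
    _ ≤ ⟪u, S u⟫ * μ := mul_le_mul_of_nonneg_left h2 hq.le
    _ = μ * ⟪u, S u⟫ := mul_comm _ _
  -- w₀ is a global minimum of F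
  set F := fun w : EuclideanSpace ℝ (Fin d) => μ * ⟪w, S w⟫ - ⟪w, T w⟫ with hF
  have hF0 : ∀ w, 0 ≤ F w := fun w => sub_nonneg.mpr (claim w)
  have hFw₀ : F w₀ = 0 := by rw [hF]; simp only [hw₀1, mul_one]; rw [← hμ]; ring
  have hlocmin : IsLocalMin F w₀ :=
    Filter.Eventually.of_forall (fun w => by rw [hFw₀]; exact hF0 w)
  -- derivative of F at w₀
  have hQS : HasFDerivAt (fun w : EuclideanSpace ℝ (Fin d) => ⟪w, S w⟫)
      ((fderivInnerCLM ℝ (w₀, S w₀)).comp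
        ((ContinuousLinearMap.id ℝ _).prod S)) w₀ :=
    (hasFDerivAt_id w₀).inner ℝ S.hasFDerivAt
  have hQT : HasFDerivAt (fun w : EuclideanSpace ℝ (Fin d) => ⟪w, T w⟫)
      ((fderivInnerCLM ℝ (w₀, T w₀)).comp
        ((ContinuousLinearMap.id ℝ _).prod T)) w₀ :=
    (hasFDerivAt_id w₀).inner ℝ T.hasFDerivAt
  have hFd : HasFDerivAt F
      (μ • ((fderivInnerCLM ℝ (w₀, S w₀)).comp ((ContinuousLinearMap.id ℝ _).prod S)) -
        (fderivInnerCLM ℝ (w₀, T w₀)).comp ((ContinuousLinearMap.id ℝ _).prod T)) w₀ := by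
    exact (hQS.const_mul μ).sub hQT
  have hzero := hlocmin.fderiv_eq_zero
  rw [hFd.fderiv] at hzero
  have heval : ∀ h : EuclideanSpace ℝ (Fin d),
      μ * (⟪w₀, S h⟫ + ⟪h, S w₀⟫) - (⟪w₀, T h⟫ + ⟪h, T w₀⟫) = 0 := by
    intro h
    have := congrFun (congrArg DFunLike.coe hzero) h
    simpa [fderivInnerCLM_apply] using this
  have hsymS : ∀ a b, ⟪S a, b⟫ = ⟪a, S b⟫ := fun a b => hess_symm hL x a b
  have hsymT : ∀ a b, ⟪T a, b⟫ = ⟪a, T b⟫ := fun a b => hess_symm hL y a b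
  have heval2 : ∀ h : EuclideanSpace ℝ (Fin d), ⟪h, μ • S w₀ - T w₀⟫ = 0 := by
    intro h
    have e1 : ⟪w₀, S h⟫ = ⟪h, S w₀⟫ := by rw [← hsymS w₀ h, real_inner_comm]
    have e2 : ⟪w₀, T h⟫ = ⟪h, T w₀⟫ := by rw [← hsymT w₀ h, real_inner_comm]
    have := heval h
    rw [e1, e2] at this
    rw [inner_sub_right, real_inner_smul_right]
    linarith
  have hTw₀ : T w₀ = μ • S w₀ := by
    have := heval2 (μ • S w₀ - T w₀)
    rw [inner_self_eq_zero, sub_eq_zero] at this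
    exact this.symm
  -- use the operator norm bound
  have happ : (S.inverse.comp T) w₀ = μ • w₀ := by
    rw [ContinuousLinearMap.comp_apply, hTw₀, map_smul, hS, hess_inv_left hPD x w₀]
  have hnorm : μ * ‖w₀‖ ≤ N * ‖w₀‖ := by
    have h1 : ‖(S.inverse.comp T) w₀‖ ≤ ‖S.inverse.comp T‖ * ‖w₀‖ :=
      (S.inverse.comp T).le_opNorm w₀
    rw [happ, norm_smul, Real.norm_eq_abs, abs_of_pos hμ0] at h1
    have h2 : ‖S.inverse.comp T‖ * ‖w₀‖ ≤ N * ‖w₀‖ :=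
      mul_le_mul_of_nonneg_right (by rw [hS, hT]; exact hbound x y) (norm_nonneg _)
    linarith
  have hμN : μ ≤ N := by
    have hw₀n : 0 < ‖w₀‖ := norm_pos_iff.mpr hw₀
    exact le_of_mul_le_mul_right (by linarith) hw₀n
  calc ⟪v, T v⟫ ≤ μ * ⟪v, S v⟫ := claim v
  _ ≤ N * ⟪v, S v⟫ := mul_le_mul_of_nonneg_right hμN (hPD x v hv).le


lemma line_hasDerivAt (a u : EuclideanSpace ℝ (Fin d)) (t : ℝ) :
    HasDerivAt (fun s : ℝ => a + s • u) u t := by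
  simpa using ((hasDerivAt_id t).smul_const u).const_add a

lemma line_deriv1 (hL : ContDiff ℝ 2 L) (a u : EuclideanSpace ℝ (Fin d)) (t : ℝ) :
    HasDerivAt (fun s : ℝ => L (a + s • u)) ⟪gradient L (a + t • u), u⟫ t := by
  have hLd : HasFDerivAt L (fderiv ℝ L (a + t • u)) (a + t • u) :=
    (hL.differentiable (by norm_num) _).hasFDerivAt
  have := hLd.comp_hasDerivAt t (line_hasDerivAt a u t)
  rwa [grad_eq]

lemma line_deriv2 (hL : ContDiff ℝ 2 L) (a u : EuclideanSpace ℝ (Fin d)) (t : ℝ) :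
    HasDerivAt (fun s : ℝ => ⟪gradient L (a + s • u), u⟫) ⟪Hess L (a + t • u) u, u⟫ t := by
  have hG : HasDerivAt (fun s : ℝ => gradient L (a + s • u)) (Hess L (a + t • u) u) t :=
    by have := (grad_hasFDerivAt hL (a + t • u)).comp_hasDerivAt t (line_hasDerivAt a u t); exact this
  have := hG.inner ℝ (hasDerivAt_const t u)
  simpa using this

lemma taylor_lb (hL : ContDiff ℝ 2 L) (a u : EuclideanSpace ℝ (Fin d)) (c : ℝ)
    (hc : ∀ t : ℝ, c ≤ ⟪Hess L (a + t • u) u, u⟫) :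
    L a + ⟪gradient L a, u⟫ + c / 2 ≤ L (a + u) := by
  set ψ := fun t : ℝ => ⟪gradient L (a + t • u), u⟫ with hψ
  have step1 : ∀ t : ℝ, 0 ≤ t → ψ 0 + c * t ≤ ψ t := by
    intro t ht
    have hfd : ∀ s : ℝ, HasDerivAt (fun r : ℝ => ψ r - c * r)
        (⟪Hess L (a + s • u) u, u⟫ - c) s := by
      intro s
      have h2 : HasDerivAt (fun r : ℝ => c * r) c s := by
        simpa using (hasDerivAt_id s).const_mul c
      exact (line_deriv2 hL a u s).sub h2
    have mono : Monotone fun r : ℝ => ψ r - c * r :=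
      monotone_of_deriv_nonneg (fun s => (hfd s).differentiableAt)
        (fun s => by rw [(hfd s).deriv]; linarith [hc s])
    have := mono ht
    simp only [mul_zero, sub_zero] at this
    linarith
  set g := fun t : ℝ => L (a + t • u) - ψ 0 * t - c * (t ^ 2 / 2) with hg
  have hgd : ∀ t : ℝ, HasDerivAt g (ψ t - ψ 0 - c * t) t := by
    intro t
    have h1 : HasDerivAt (fun r : ℝ => ψ 0 * r) (ψ 0) t := by
      simpa using (hasDerivAt_id t).const_mul (ψ 0)
    have h2 : HasDerivAt (fun r : ℝ => c * (r ^ 2 / 2)) (c * t) t := by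
      have hp : HasDerivAt (fun r : ℝ => r ^ 2 / 2) t t := by
        simpa using (hasDerivAt_pow 2 t).div_const 2
      simpa using hp.const_mul c
    exact ((line_deriv1 hL a u t).sub h1).sub h2
  have mono2 : MonotoneOn g (Set.Ici (0 : ℝ)) := by
    apply monotoneOn_of_deriv_nonneg (convex_Ici 0)
      (fun t _ => (hgd t).differentiableAt.continuousAt.continuousWithinAt)
      (fun t _ => (hgd t).differentiableAt.differentiableWithinAt)
    intro t ht
    rw [interior_Ici] at ht
    rw [(hgd t).deriv]
    have := step1 t (le_of_lt ht)
    linarith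
  have h01 := mono2 (Set.self_mem_Ici) (by norm_num : (1:ℝ) ∈ Set.Ici (0:ℝ)) zero_le_one
  have hg0 : g 0 = L a := by simp [hg]
  have hg1 : g 1 = L (a + u) - ψ 0 - c / 2 := by simp [hg]; ring
  have hψ0 : ψ 0 = ⟪gradient L a, u⟫ := by simp [hψ]
  rw [hg0, hg1, hψ0] at h01
  linarith

lemma taylor_ub (hL : ContDiff ℝ 2 L) (a u : EuclideanSpace ℝ (Fin d)) (c : ℝ)
    (hc : ∀ t : ℝ, ⟪Hess L (a + t • u) u, u⟫ ≤ c) :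
    L (a + u) ≤ L a + ⟪gradient L a, u⟫ + c / 2 := by
  set ψ := fun t : ℝ => ⟪gradient L (a + t • u), u⟫ with hψ
  have step1 : ∀ t : ℝ, 0 ≤ t → ψ t ≤ ψ 0 + c * t := by
    intro t ht
    have hfd : ∀ s : ℝ, HasDerivAt (fun r : ℝ => c * r - ψ r)
        (c - ⟪Hess L (a + s • u) u, u⟫) s := by
      intro s
      have h2 : HasDerivAt (fun r : ℝ => c * r) c s := by
        simpa using (hasDerivAt_id s).const_mul c
      exact h2.sub (line_deriv2 hL a u s)
    have mono : Monotone fun r : ℝ => c * r - ψ r :=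
      monotone_of_deriv_nonneg (fun s => (hfd s).differentiableAt)
        (fun s => by rw [(hfd s).deriv]; linarith [hc s])
    have := mono ht
    simp only [mul_zero, zero_sub] at this
    linarith
  set g := fun t : ℝ => ψ 0 * t + c * (t ^ 2 / 2) - L (a + t • u) with hg
  have hgd : ∀ t : ℝ, HasDerivAt g (ψ 0 + c * t - ψ t) t := by
    intro t
    have h1 : HasDerivAt (fun r : ℝ => ψ 0 * r) (ψ 0) t := by
      simpa using (hasDerivAt_id t).const_mul (ψ 0)
    have h2 : HasDerivAt (fun r : ℝ => c * (r ^ 2 / 2)) (c * t) t := by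
      have hp : HasDerivAt (fun r : ℝ => r ^ 2 / 2) t t := by
        simpa using (hasDerivAt_pow 2 t).div_const 2
      simpa using hp.const_mul c
    exact (h1.add h2).sub (line_deriv1 hL a u t)
  have mono2 : MonotoneOn g (Set.Ici (0 : ℝ)) := by
    apply monotoneOn_of_deriv_nonneg (convex_Ici 0)
      (fun t _ => (hgd t).differentiableAt.continuousAt.continuousWithinAt)
      (fun t _ => (hgd t).differentiableAt.differentiableWithinAt)
    intro t ht
    rw [interior_Ici] at ht
    rw [(hgd t).deriv]
    have := step1 t (le_of_lt ht)
    linarith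
  have h01 := mono2 (Set.self_mem_Ici) (by norm_num : (1:ℝ) ∈ Set.Ici (0:ℝ)) zero_le_one
  have hg0 : g 0 = -L a := by simp [hg]
  have hg1 : g 1 = ψ 0 + c / 2 - L (a + u) := by simp [hg]; ring
  have hψ0 : ψ 0 = ⟪gradient L a, u⟫ := by simp [hψ]
  rw [hg0, hg1, hψ0] at h01
  linarith

/-- under the standing assumptions, for every z,
(2/N)(L(z) − L_min) ≤ ⟨∇L(z), (∇²L(z))⁻¹ ∇L(z)⟩ ≤ 2N (L(z) − L_min). -/
theorem statement17 (d : ℕ) (hd : 0 < d) (L : EuclideanSpace ℝ (Fin d) → ℝ)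
    (hL : ContDiff ℝ 2 L)
    (hconv : StrictConvexOn ℝ Set.univ L)
    (hPD : ∀ x v : EuclideanSpace ℝ (Fin d), v ≠ 0 → 0 < ⟪v, Hess L x v⟫)
    (xstar : EuclideanSpace ℝ (Fin d))
    (hmin : ∀ y, L xstar ≤ L y) (hcrit : gradient L xstar = 0)
    (N : ℝ) (hN : 1 ≤ N)
    (hbound : ∀ x y, ‖(Hess L x).inverse.comp (Hess L y)‖ ≤ N) :
    ∀ z : EuclideanSpace ℝ (Fin d),
      (2 / N) * (L z - L xstar) ≤
          ⟪gradient L z, (Hess L z).inverse (gradient L z)⟫ ∧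
      ⟪gradient L z, (Hess L z).inverse (gradient L z)⟫ ≤
          2 * N * (L z - L xstar) := by
  intro z
  have N0 : (0:ℝ) < N := lt_of_lt_of_le one_pos hN
  have hN0 : N ≠ 0 := N0.ne'
  set p := (Hess L z).inverse (gradient L z) with hp
  set lam2 := ⟪gradient L z, p⟫ with hlam2def
  have hHp : Hess L z p = gradient L z := hess_inv_right hPD z (gradient L z)
  have hsym := hess_symm hL z
  have hlam2 : lam2 = ⟪p, Hess L z p⟫ := by
    rw [hlam2def, ← hHp, real_inner_comm]
  have hscale : ∀ (c : ℝ) (w : EuclideanSpace ℝ (Fin d))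
      (A : EuclideanSpace ℝ (Fin d) →L[ℝ] EuclideanSpace ℝ (Fin d)),
      ⟪c • w, A (c • w)⟫ = c ^ 2 * ⟪w, A w⟫ := by
    intro c w A
    rw [map_smul, real_inner_smul_left, real_inner_smul_right]; ring
  constructor
  · -- lower bound
    set u := xstar - z with hu
    set Q := ⟪u, Hess L z u⟫ with hQ
    set G := ⟪gradient L z, u⟫ with hG
    have hc : ∀ t : ℝ, (1/N) * Q ≤ ⟪Hess L (z + t • u) u, u⟫ := by
      intro t
      have h1 : ⟪u, Hess L z u⟫ ≤ N * ⟪u, Hess L (z + t • u) u⟫ :=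
        hess_cmp hd hL hPD hbound (z + t • u) z u
      rw [real_inner_comm]
      rw [div_mul_eq_mul_div, one_mul, div_le_iff₀ N0, mul_comm]
      exact h1
    have htl := taylor_lb hL z u ((1/N) * Q) hc
    have hz : z + u = xstar := by rw [hu]; abel
    rw [hz] at htl
    -- quadratic nonnegativity
    have hquad : 0 ≤ ⟪u + N • p, Hess L z (u + N • p)⟫ := by
      rcases eq_or_ne (u + N • p) 0 with h | h
      · rw [h]; simp
      · exact (hPD z _ h).le
    have hexp : ⟪u + N • p, Hess L z (u + N • p)⟫ = Q + 2 * N * G + N ^ 2 * lam2 := by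
      have e : Hess L z (u + N • p) = Hess L z u + N • gradient L z := by
        rw [map_add, map_smul, hHp]
      rw [e, inner_add_left, inner_add_right, inner_add_right, real_inner_smul_left,
        real_inner_smul_left, real_inner_smul_right, real_inner_smul_right]
      have h1 : ⟪p, Hess L z u⟫ = ⟪gradient L z, u⟫ := by
        rw [← hHp, ← hsym p u]
      have h2 : ⟪u, gradient L z⟫ = ⟪gradient L z, u⟫ := real_inner_comm _ _
      have h3 : ⟪p, gradient L z⟫ = lam2 := by
        rw [hlam2def, real_inner_comm]
      rw [h1, h2, h3, hG, hQ]
      ring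
    rw [hexp] at hquad
    -- divide by 2N
    have h2N : (0:ℝ) < 2 * N := by linarith
    have key : -((N/2) * lam2) ≤ G + Q / (2*N) := by
      have e : (G + Q/(2*N) + (N/2)*lam2) * (2*N) = Q + 2*N*G + N^2*lam2 := by
        field_simp; ring
      have h0 : (0:ℝ) * (2*N) ≤ (G + Q/(2*N) + (N/2)*lam2) * (2*N) := by
        rw [zero_mul, e]; exact hquad
      have := le_of_mul_le_mul_right h0 h2N
      linarith
    have hc2 : (1/N) * Q / 2 = Q / (2*N) := by rw [div_mul_eq_mul_div, one_mul, div_div, mul_comm]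
    rw [hc2] at htl
    -- L xstar - L z ≥ G + Q/(2N) ≥ -(N/2) lam2
    have hfin : L z - L xstar ≤ (N/2) * lam2 := by linarith
    calc (2/N) * (L z - L xstar) ≤ (2/N) * ((N/2) * lam2) :=
          mul_le_mul_of_nonneg_left hfin (by positivity)
    _ = lam2 := by field_simp
  · -- upper bound
    set u := -((1/N) • p) with hu
    set c := N * ⟪u, Hess L z u⟫ with hc
    have hcb : ∀ t : ℝ, ⟪Hess L (z + t • u) u, u⟫ ≤ c := by
      intro t
      have h1 : ⟪u, Hess L (z + t • u) u⟫ ≤ N * ⟪u, Hess L z u⟫ :=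
        hess_cmp hd hL hPD hbound z (z + t • u) u
      rw [real_inner_comm]
      exact h1
    have htu := taylor_ub hL z u c hcb
    have hmin' := hmin (z + u)
    have hq1 : ⟪u, Hess L z u⟫ = (1/N)^2 * lam2 := by
      rw [hu, hlam2]
      have : -((1/N) • p) = (-(1/N)) • p := by rw [neg_smul]
      rw [this, hscale]
      ring
    have hgu : ⟪gradient L z, u⟫ = -((1/N) * lam2) := by
      rw [hu, inner_neg_right, real_inner_smul_right, hlam2def]
    have hch : c = (1/N) * lam2 := by
      rw [hc, hq1]; field_simp
    rw [hgu, hch] at htu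
    -- L xstar ≤ L z - (1/N) lam2 + (1/N) lam2 / 2
    have hfin : lam2 / (2*N) ≤ L z - L xstar := by
      have e : L z + -((1/N) * lam2) + (1/N) * lam2 / 2 = L z - lam2 / (2*N) := by
        first | (field_simp; ring) | field_simp
      rw [e] at htu
      linarith
    calc lam2 = 2 * N * (lam2 / (2*N)) := by first | (field_simp; ring) | field_simp
    _ ≤ 2 * N * (L z - L xstar) := mul_le_mul_of_nonneg_left hfin (by positivity)

end
end

section
/- Let L : ℝ^d → ℝ be twice continuously differentiable and strictly convex, with everywhere positive definite Hessian ∇²L, and suppose there is N ≥ 1 such that ‖(∇²L(x))⁻¹ ∇²L(y)‖ ≤ N for all x, y ∈ ℝ^d. Fix a step size η > 0 and x ∈ ℝ^d, and define the Newton update x_new := x − η · (∇²L(x))⁻¹ ∇L(x). Then L(x_new) − L(x) ≤ −(η − (N/2)η²) · ⟨∇L(x), (∇²L(x))⁻¹ ∇L(x)⟩. -/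
/-!
Along the segment from `x` to the Newton point `x + w`, `w = -η (∇²L(x))⁻¹ ∇L(x)`, the function
`t ↦ L (x + t w)` has second derivative `⟪∇²L(y) w, w⟫`, so a second-order Taylor bound reduces
the claim to `⟪∇²L(y) w, w⟫ ≤ N ⟪∇²L(x) w, w⟫`. With `H = ∇²L(x)` and `B = H⁻¹ ∇²L(y)`, the map
`B` is self-adjoint for the semi-inner product `⟪H ·, ·⟫`, so its Rayleigh quotient is bounded by
`‖B‖ ≤ N`. This is proved by the power method: Cauchy–Schwarz for `⟪H ·, ·⟫` gives
`r ^ 2 ^ k ≤ ⟪H (B ^ 2 ^ k) v, v⟫ / ⟪H v, v⟫ = O(N ^ 2 ^ k)` for the Rayleigh quotient `r`.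
-/

open RealInnerProductSpace

noncomputable section

open Filter Topology Set

section Rayleigh

variable {E : Type*} [NormedAddCommGroup E] [InnerProductSpace ℝ E]

theorem le_of_frequently_pow_le_mul_pow {a b C : ℝ} (hb : 0 ≤ b)
    (h : ∃ᶠ n : ℕ in atTop, a ^ n ≤ C * b ^ n) : a ≤ b := by
  by_contra! hab
  have ha : 0 < a := hb.trans_lt hab
  have hlim : Tendsto (fun n : ℕ => C * (b / a) ^ n) atTop (𝓝 0) := by
    simpa using (tendsto_pow_atTop_nhds_zero_of_lt_one (div_nonneg hb ha.le)
      ((div_lt_one ha).mpr hab)).const_mul C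
  obtain ⟨n, hn, hsmall⟩ := (h.and_eventually (hlim.eventually (gt_mem_nhds one_pos))).exists
  rw [div_pow, mul_div_assoc', div_lt_one (pow_pos ha n)] at hsmall
  exact hn.not_gt hsmall

namespace ContinuousLinearMap

theorem injective_of_inner_apply_pos {f : E →L[ℝ] E} (hf : ∀ v, v ≠ 0 → 0 < ⟪v, f v⟫) :
    Function.Injective f :=
  (injective_iff_map_eq_zero f).mpr fun v hv => by
    by_contra h
    simpa [hv] using hf v h

theorem IsPositive.inner_apply_sq_le {H : E →L[ℝ] E} (hH : H.IsPositive) (u w : E) :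
    ⟪H u, w⟫ ^ 2 ≤ ⟪H u, u⟫ * ⟪H w, w⟫ := by
  have hsymm : ⟪H w, u⟫ = ⟪H u, w⟫ := by
    rw [hH.inner_left_eq_inner_right, real_inner_comm]
  have hdisc := discrim_le_zero (a := ⟪H w, w⟫) (b := -2 * ⟪H u, w⟫) (c := ⟪H u, u⟫)
      fun t => by
    have := hH.inner_nonneg_left (u - t • w)
    simp only [map_sub, map_smul, inner_sub_left, inner_sub_right, real_inner_smul_left,
      real_inner_smul_right, hsymm] at this
    linarith
  rw [discrim] at hdisc
  linarith

theorem inner_apply_pow_apply_eq {H B : E →L[ℝ] E}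
    (hB : ∀ u w, ⟪H (B u), w⟫ = ⟪H u, B w⟫) (m : ℕ) (u w : E) :
    ⟪H ((B ^ m) u), w⟫ = ⟪H u, (B ^ m) w⟫ := by
  induction m generalizing u w with
  | zero => rfl
  | succ m ih =>
    calc ⟪H ((B ^ (m + 1)) u), w⟫ = ⟪H ((B ^ m) (B u)), w⟫ := by
          rw [pow_succ, mul_apply_eq_comp]
      _ = ⟪H u, (B ^ (m + 1)) w⟫ := by rw [ih, hB, pow_succ', mul_apply_eq_comp]

theorem IsPositive.div_pow_two_pow_le_div {H B : E →L[ℝ] E} (hH : H.IsPositive)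
    (hB : ∀ u w, ⟪H (B u), w⟫ = ⟪H u, B w⟫) {v : E} (hv : 0 < ⟪H v, v⟫)
    (hBv : 0 ≤ ⟪H (B v), v⟫) (k : ℕ) :
    (⟪H (B v), v⟫ / ⟪H v, v⟫) ^ 2 ^ k ≤ ⟪H ((B ^ 2 ^ k) v), v⟫ / ⟪H v, v⟫ := by
  induction k with
  | zero => simp
  | succ k ih =>
    set w := (B ^ 2 ^ k) v
    have hcs : ⟪H w, v⟫ ^ 2 ≤ ⟪H ((B ^ 2 ^ (k + 1)) v), v⟫ * ⟪H v, v⟫ := by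
      have hww : ⟪H ((B ^ 2 ^ (k + 1)) v), v⟫ = ⟪H w, w⟫ := by
        rw [pow_succ, pow_mul, sq, mul_apply_eq_comp, inner_apply_pow_apply_eq hB]
      rw [hww]
      exact hH.inner_apply_sq_le w v
    calc (⟪H (B v), v⟫ / ⟪H v, v⟫) ^ 2 ^ (k + 1)
        = ((⟪H (B v), v⟫ / ⟪H v, v⟫) ^ 2 ^ k) ^ 2 := by rw [pow_succ, pow_mul]
      _ ≤ (⟪H w, v⟫ / ⟪H v, v⟫) ^ 2 := by gcongr
      _ ≤ ⟪H ((B ^ 2 ^ (k + 1)) v), v⟫ / ⟪H v, v⟫ := by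
        rw [div_pow, sq ⟪H v, v⟫, ← div_div, div_le_div_iff_of_pos_right hv]
        exact (div_le_iff₀ hv).mpr hcs

theorem IsPositive.inner_apply_self_le_of_comp_eq {H A B : E →L[ℝ] E} (hH : H.IsPositive)
    (hA : A.IsPositive) (hHB : H ∘L B = A) {N : ℝ} (hB : ‖B‖ ≤ N) (v : E) :
    ⟪A v, v⟫ ≤ N * ⟪H v, v⟫ := by
  have hA_eq : ∀ u, A u = H (B u) := fun u => by rw [← hHB]; rfl
  have hB_symm : ∀ u w, ⟪H (B u), w⟫ = ⟪H u, B w⟫ := fun u w => by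
    rw [← hA_eq, hA.inner_left_eq_inner_right, hA_eq, hH.inner_left_eq_inner_right]
  rcases (hH.inner_nonneg_left v).eq_or_lt with hv | hv
  · have hcs := hH.inner_apply_sq_le (B v) v
    rw [← hv, mul_zero] at hcs
    rw [hA_eq, ← hv, mul_zero]
    nlinarith
  have hS_le : ∀ n, 0 < n → ⟪H ((B ^ n) v), v⟫ ≤ ‖H‖ * ‖v‖ ^ 2 * N ^ n := by
    intro n hn
    calc ⟪H ((B ^ n) v), v⟫ ≤ ‖H ((B ^ n) v)‖ * ‖v‖ := real_inner_le_norm _ _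
      _ ≤ ‖H‖ * (‖B ^ n‖ * ‖v‖) * ‖v‖ := by
          gcongr
          exact H.le_opNorm_of_le ((B ^ n).le_opNorm v)
      _ ≤ ‖H‖ * (N ^ n * ‖v‖) * ‖v‖ := by
          gcongr
          exact (norm_pow_le' B hn).trans (pow_le_pow_left₀ (norm_nonneg B) hB n)
      _ = ‖H‖ * ‖v‖ ^ 2 * N ^ n := by ring
  have hratio : ⟪A v, v⟫ / ⟪H v, v⟫ ≤ N := by
    refine le_of_frequently_pow_le_mul_pow (C := ‖H‖ * ‖v‖ ^ 2 / ⟪H v, v⟫)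
      ((norm_nonneg B).trans hB) <| (tendsto_pow_atTop_atTop_of_one_lt one_lt_two).frequently
        (Frequently.of_forall fun k => ?_)
    rw [hA_eq]
    refine (hH.div_pow_two_pow_le_div hB_symm hv (hA_eq v ▸ hA.inner_nonneg_left v) k).trans ?_
    calc ⟪H ((B ^ 2 ^ k) v), v⟫ / ⟪H v, v⟫ ≤ ‖H‖ * ‖v‖ ^ 2 * N ^ 2 ^ k / ⟪H v, v⟫ := by
          gcongr
          exact hS_le _ (by positivity)
      _ = ‖H‖ * ‖v‖ ^ 2 / ⟪H v, v⟫ * N ^ 2 ^ k := by ring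
  exact (div_le_iff₀' hv).mp hratio |>.trans_eq (mul_comm _ _)

end ContinuousLinearMap

end Rayleigh

theorem ContinuousLinearMap.isInvertible_of_injective {𝕜 E : Type*} [NontriviallyNormedField 𝕜]
    [CompleteSpace 𝕜] [NormedAddCommGroup E] [NormedSpace 𝕜 E] [FiniteDimensional 𝕜 E]
    {f : E →L[𝕜] E} (hf : Function.Injective f) : f.IsInvertible :=
  ⟨(LinearEquiv.ofInjectiveEndo (f : E →ₗ[𝕜] E) hf).toContinuousLinearEquiv, rfl⟩

theorem le_add_mul_add_of_hasDerivAt_of_le {f f' f'' : ℝ → ℝ} {M : ℝ}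
    (hf : ∀ t, HasDerivAt f (f' t) t) (hf' : ∀ t, HasDerivAt f' (f'' t) t)
    (hM : ∀ t, f'' t ≤ M) {t : ℝ} (ht : 0 ≤ t) :
    f t ≤ f 0 + f' 0 * t + M / 2 * t ^ 2 := by
  have hslope : ∀ s ∈ Ico 0 t, f' s ≤ f' 0 + M * s := by
    refine fun s hs => image_le_of_deriv_right_le_deriv_boundary
      (fun r _ => (hf' r).continuousAt.continuousWithinAt)
      (fun r _ => (hf' r).hasDerivWithinAt) (B := fun s => f' 0 + M * s) (B' := fun _ => M)
      (by simp) (by fun_prop) (fun r _ => ?_) (fun r _ => hM r) ⟨hs.1, hs.2.le⟩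
    simpa using ((hasDerivAt_id r).const_mul M).const_add (f' 0) |>.hasDerivWithinAt
  refine image_le_of_deriv_right_le_deriv_boundary
    (fun r _ => (hf r).continuousAt.continuousWithinAt)
    (fun r _ => (hf r).hasDerivWithinAt) (B := fun s => f 0 + f' 0 * s + M / 2 * s ^ 2)
    (B' := fun s => f' 0 + M * s) (by simp)
    (by fun_prop) (fun r _ => ?_) hslope ⟨ht, le_rfl⟩
  have := (((hasDerivAt_id r).const_mul (f' 0)).const_add (f 0)).add
    ((hasDerivAt_pow 2 r).const_mul (M / 2))
  exact (this.congr_deriv (by norm_num; ring)).hasDerivWithinAt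

section Hessian

variable {d : ℕ}

theorem inner_hess_apply (L : EuclideanSpace ℝ (Fin d) → ℝ)
    (x v w : EuclideanSpace ℝ (Fin d)) :
    ⟪Hess L x v, w⟫ = fderiv ℝ (fderiv ℝ L) x v w := by
  have hgrad : gradient L = (InnerProductSpace.toDual ℝ _).symm ∘ fderiv ℝ L := rfl
  rw [Hess, hgrad, LinearIsometryEquiv.comp_fderiv]
  exact InnerProductSpace.toDual_symm_apply

theorem isPositive_hess {L : EuclideanSpace ℝ (Fin d) → ℝ} (hL : ContDiff ℝ 2 L)
    {x : EuclideanSpace ℝ (Fin d)} (hx : ∀ v, 0 ≤ ⟪Hess L x v, v⟫) : (Hess L x).IsPositive := by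
  refine ⟨fun v w => ?_, hx⟩
  rw [ContinuousLinearMap.coe_coe, inner_hess_apply, real_inner_comm, inner_hess_apply]
  exact hL.contDiffAt.isSymmSndFDerivAt (by simp) v w

theorem hasFDerivAt_gradient {L : EuclideanSpace ℝ (Fin d) → ℝ} (hL : ContDiff ℝ 2 L)
    (x : EuclideanSpace ℝ (Fin d)) : HasFDerivAt (gradient L) (Hess L x) x := by
  have hgrad : gradient L = (InnerProductSpace.toDual ℝ _).symm ∘ fderiv ℝ L := rfl
  have : ContDiff ℝ 1 (gradient L) := hgrad ▸
    (InnerProductSpace.toDual ℝ _).symm.contDiff.comp (hL.fderiv_right (by norm_num))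
  exact (this.differentiable one_ne_zero x).hasFDerivAt

theorem sub_le_inner_gradient_add_of_inner_hess_le {L : EuclideanSpace ℝ (Fin d) → ℝ}
    (hL : ContDiff ℝ 2 L) (x w : EuclideanSpace ℝ (Fin d)) {M : ℝ}
    (hM : ∀ y, ⟪Hess L y w, w⟫ ≤ M) :
    L (x + w) - L x ≤ ⟪gradient L x, w⟫ + M / 2 := by
  have hline : ∀ t : ℝ, HasDerivAt (fun t : ℝ => x + t • w) w t := fun t => by
    simpa using ((hasDerivAt_id t).smul_const w).const_add x
  have hf : ∀ t : ℝ, HasDerivAt (fun t : ℝ => L (x + t • w))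
      ⟪gradient L (x + t • w), w⟫ t := fun t =>
    ((hL.differentiable (by norm_num) _).hasGradientAt.hasFDerivAt).comp_hasDerivAt t (hline t)
  have hf' : ∀ t : ℝ, HasDerivAt (fun t : ℝ => ⟪gradient L (x + t • w), w⟫)
      ⟪Hess L (x + t • w) w, w⟫ t := fun t => by
    simpa using ((hasFDerivAt_gradient hL _).comp_hasDerivAt t (hline t)).inner ℝ
      (hasDerivAt_const t w)
  have := le_add_mul_add_of_hasDerivAt_of_le hf hf' (fun t => hM _) zero_le_one
  simp only [one_smul, zero_smul, add_zero, mul_one, one_pow] at this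
  linarith

end Hessian

theorem statement18_general (d : ℕ) (L : EuclideanSpace ℝ (Fin d) → ℝ)
    (hL : ContDiff ℝ 2 L)
    (hPD : ∀ x v : EuclideanSpace ℝ (Fin d), v ≠ 0 → 0 < ⟪v, Hess L x v⟫)
    (N : ℝ)
    (hbound : ∀ x y, ‖(Hess L x).inverse.comp (Hess L y)‖ ≤ N)
    (η : ℝ) (x : EuclideanSpace ℝ (Fin d)) :
    L (x - η • (Hess L x).inverse (gradient L x)) - L x ≤
      -(η - N / 2 * η ^ 2) *
        ⟪gradient L x, (Hess L x).inverse (gradient L x)⟫ := by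
  have hpos : ∀ y, (Hess L y).IsPositive := fun y => isPositive_hess hL fun v => by
    rcases eq_or_ne v 0 with rfl | hv
    · simp
    · exact (real_inner_comm v _ ▸ hPD y v hv).le
  have hinv : (Hess L x).IsInvertible := ContinuousLinearMap.isInvertible_of_injective
    (ContinuousLinearMap.injective_of_inner_apply_pos (hPD x))
  set g := gradient L x
  set v := (Hess L x).inverse g
  have hHv : Hess L x v = g := hinv.self_apply_inverse g
  have hcurv : ∀ y,
      ⟪Hess L y (-(η • v)), -(η • v)⟫ ≤ N * ⟪Hess L x (-(η • v)), -(η • v)⟫ :=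
    fun y => (hpos x).inner_apply_self_le_of_comp_eq (hpos y)
      (by rw [← ContinuousLinearMap.comp_assoc, hinv.self_comp_inverse,
        ContinuousLinearMap.id_comp]) (hbound x y) _
  have h := sub_le_inner_gradient_add_of_inner_hess_le hL x _ hcurv
  rw [← sub_eq_add_neg] at h
  simp only [map_neg, map_smul, hHv, inner_neg_left, inner_neg_right, real_inner_smul_left,
    real_inner_smul_right, neg_neg] at h
  linarith

/-- for the Newton update x_new = x − η (∇²L(x))⁻¹ ∇L(x),
L(x_new) − L(x) ≤ −(η − (N/2)η²) ⟨∇L(x), (∇²L(x))⁻¹ ∇L(x)⟩. -/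
theorem statement18 (d : ℕ) (hd : 0 < d) (L : EuclideanSpace ℝ (Fin d) → ℝ)
    (hL : ContDiff ℝ 2 L)
    (hconv : StrictConvexOn ℝ Set.univ L)
    (hPD : ∀ x v : EuclideanSpace ℝ (Fin d), v ≠ 0 → 0 < ⟪v, Hess L x v⟫)
    (N : ℝ) (hN : 1 ≤ N)
    (hbound : ∀ x y, ‖(Hess L x).inverse.comp (Hess L y)‖ ≤ N)
    (η : ℝ) (hη : 0 < η) (x : EuclideanSpace ℝ (Fin d)) :
    L (x - η • (Hess L x).inverse (gradient L x)) - L x ≤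
      -(η - N / 2 * η ^ 2) *
        ⟪gradient L x, (Hess L x).inverse (gradient L x)⟫ :=
  statement18_general d L hL hPD N hbound η x

end
end
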